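/- arXiv:1312.7426 — 5 statements merged into one kernel-verified Lean document; each statement's English description precedes it below -/
import Mathlib

section
/- Let D be a dendrite. If the set End(D) of endpoints of D is dense in D, then End(D) is a residual subset of D (i.e., End(D) contains a countable intersection of dense open subsets of D; equivalently its complement is meagre). -/
/-!
For `δ > 0` call `w` a `δ`-fat cut point if `D` is the union of two continua meeting only at `w`,
each containing a point at distance `≥ δ` from `w`. Every non-endpoint is a `δ`-fat cut point for
some `δ`, so it suffices that no endpoint `p` lies in the closure of the `δ`-fat cut points: the
complements of these closures are then dense open sets whose intersection consists of endpoints.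

If `δ`-fat cut points `w_k` tend to `p`, pass to a subsequence along which both sides converge in
the Hausdorff metric; their limits are closed sets covering `D`, each with a point other than `p`.
As `D \ {p}` is connected they share a point `q ≠ p`. A point `z` separating `p` from `q` then lies
on both sides of `w_k` for large `k`, so `z = w_k`, which is absurd. This uses that the components
of `D \ {z}` are open, a consequence of the separation property and boundary bumping.
-/

open Set Topology Filter TopologicalSpace

/-- A dendrite: a nondegenerate continuum in which any two distinct points can be
separated by a third point. -/
def IsDendrite (X : Type*) [TopologicalSpace X] : Prop :=
  Nontrivial X ∧ ∀ x y : X, x ≠ y → ∃ z : X, z ≠ x ∧ z ≠ y ∧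
    connectedComponentIn ({z}ᶜ : Set X) x ≠ connectedComponentIn ({z}ᶜ : Set X) y

/-- `p` is an endpoint of `X` if `X \ {p}` is connected. -/
def IsEndpointOf (X : Type*) [TopologicalSpace X] (p : X) : Prop :=
  IsPreconnected ({p}ᶜ : Set X)

/-- A periodic point of `f`. -/
def IsPeriodic {X : Type*} (f : X → X) (x : X) : Prop :=
  ∃ n : ℕ, 1 ≤ n ∧ f^[n] x = x

/-- `x` has dense forward orbit under `f`. -/
def HasDenseOrbit {X : Type*} [TopologicalSpace X] (f : X → X) (x : X) : Prop :=
  Dense {y : X | ∃ n : ℕ, 1 ≤ n ∧ f^[n] x = y}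

/-- Topological transitivity. -/
def TopTransitive {X : Type*} [TopologicalSpace X] (f : X → X) : Prop :=
  ∀ U V : Set X, IsOpen U → IsOpen V → U.Nonempty → V.Nonempty →
    ∃ n : ℕ, 0 < n ∧ (f^[n] '' U ∩ V).Nonempty

/-- Total transitivity: every iterate is transitive. -/
def TotallyTransitive {X : Type*} [TopologicalSpace X] (f : X → X) : Prop :=
  ∀ n : ℕ, 1 ≤ n → TopTransitive (f^[n])

/-- Weak mixing: `f × f` is transitive. -/
def WeaklyMixing {X : Type*} [TopologicalSpace X] (f : X → X) : Prop :=
  TopTransitive (Prod.map f f)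

/-- Topological mixing. -/
def TopMixing {X : Type*} [TopologicalSpace X] (f : X → X) : Prop :=
  ∀ U V : Set X, IsOpen U → IsOpen V → U.Nonempty → V.Nonempty →
    ∃ N : ℕ, ∀ n, N ≤ n → (f^[n] '' U ∩ V).Nonempty

/-- Exactness. -/
def TopExact {X : Type*} [TopologicalSpace X] (f : X → X) : Prop :=
  ∀ U : Set X, IsOpen U → U.Nonempty → ∃ N : ℕ, 0 < N ∧ f^[N] '' U = Set.univ

/-- `A` is an arc with endpoints `a` and `b`. -/
def IsArcEnds {X : Type*} [TopologicalSpace X] (A : Set X) (a b : X) : Prop :=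
  ∃ e : (Set.Icc (0:ℝ) 1) ≃ₜ A,
    (e ⟨0, by norm_num⟩ : X) = a ∧ (e ⟨1, by norm_num⟩ : X) = b

/-- `A` is a free arc with endpoints `a` and `b`. -/
def IsFreeArc {X : Type*} [TopologicalSpace X] (A : Set X) (a b : X) : Prop :=
  IsArcEnds A a b ∧ IsOpen (A \ {a, b})

/-- A regular periodic decomposition of length `m` for `f`. -/
def IsRegPerDecomp {X : Type*} [TopologicalSpace X] (f : X → X) (m : ℕ)
    (Ds : ZMod m → Set X) : Prop :=
  0 < m ∧ (∀ i, Ds i = closure (interior (Ds i))) ∧ (⋃ i, Ds i) = Set.univ ∧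
    (∀ i, f '' Ds i = Ds (i + 1)) ∧ (∀ i j, i ≠ j → IsNowhereDense (Ds i ∩ Ds j))

/-- `f` admits a terminal (maximal-length) regular periodic decomposition. -/
def HasTerminalDecomp {X : Type*} [TopologicalSpace X] (f : X → X) : Prop :=
  ∃ (m : ℕ) (Ds : ZMod m → Set X), IsRegPerDecomp f m Ds ∧
    ∀ (m' : ℕ) (Ds' : ZMod m' → Set X), IsRegPerDecomp f m' Ds' → m' ≤ m

/-- The induced map on the hyperspace of nonempty closed (= compact) subsets. -/
def hyperMap {X : Type*} [TopologicalSpace X] {f : X → X} (hf : Continuous f) :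
    NonemptyCompacts X → NonemptyCompacts X :=
  fun A => ⟨⟨f '' A, A.isCompact.image hf⟩, A.nonempty.image f⟩

/-- The set of connected components of `X \ {p}`. -/
def componentsAt (X : Type*) [TopologicalSpace X] (p : X) : Set (Set X) :=
  {C | ∃ x : X, x ≠ p ∧ C = connectedComponentIn ({p}ᶜ : Set X) x}

section Components

variable {X : Type*} [TopologicalSpace X]

theorem mem_connectedComponentIn_of_mem_closure {F : Set X} {x t : X}
    (ht : t ∈ closure (connectedComponentIn F x)) (htF : t ∈ F) :
    t ∈ connectedComponentIn F x := by
  obtain ⟨y, hy⟩ := closure_nonempty_iff.1 ⟨t, ht⟩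
  have hxF : x ∈ F := connectedComponentIn_nonempty_iff.1 ⟨y, hy⟩
  exact (isPreconnected_connectedComponentIn.subset_closure (subset_insert t _)
    (insert_subset ht subset_closure)).subset_connectedComponentIn
    (mem_insert_of_mem _ (mem_connectedComponentIn hxF))
    (insert_subset htF (connectedComponentIn_subset _ _)) (mem_insert t _)

theorem connectedComponentIn_eq_of_isPreconnected {s F : Set X} {a b : X}
    (hs : IsPreconnected s) (hsF : s ⊆ F) (ha : (s ∩ connectedComponentIn F a).Nonempty)
    (hb : (s ∩ connectedComponentIn F b).Nonempty) :
    connectedComponentIn F a = connectedComponentIn F b := by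
  obtain ⟨y, hys, hya⟩ := ha
  obtain ⟨y', hy's, hy'b⟩ := hb
  rw [connectedComponentIn_eq hya, connectedComponentIn_eq hy'b]
  exact connectedComponentIn_eq (hs.subset_connectedComponentIn hys hsF hy's)

theorem isPreconnected_compl_of_union_eq_compl_singleton [PreconnectedSpace X] {w : X}
    {U V : Set X} (hU : IsOpen U) (hV : IsOpen V) (hUV : Disjoint U V) (hcover : U ∪ V = {w}ᶜ) :
    IsPreconnected Vᶜ := by
  have hwV : w ∈ Vᶜ := fun h => (hcover ▸ Or.inr h : w ∈ ({w}ᶜ : Set X)) rfl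
  suffices key : ∀ c₁ c₂ : Set X, IsClosed c₁ → IsClosed c₂ → Vᶜ ⊆ c₁ ∪ c₂ →
      Disjoint c₁ c₂ → w ∈ c₁ → Vᶜ ⊆ c₁ by
    rw [isPreconnected_iff_subset_of_fully_disjoint_closed hV.isClosed_compl]
    intro c₁ c₂ h₁ h₂ hsub hd
    rcases hsub hwV with hw | hw
    · exact .inl (key c₁ c₂ h₁ h₂ hsub hd hw)
    · exact .inr (key c₂ c₁ h₂ h₁ (union_comm c₁ c₂ ▸ hsub) hd.symm hw)
  intro c₁ c₂ h₁ h₂ hsub hd hw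
  -- `c₂ ∩ Vᶜ` misses `w`, so it is the open set `U \ c₁`; being also closed, it is empty.
  have heq : c₂ ∩ Vᶜ = U \ c₁ := by
    ext t
    constructor
    · rintro ⟨ht₂, htV⟩
      have htw : t ≠ w := fun h => hd.notMem_of_mem_left (h ▸ hw) ht₂
      have : t ∈ U ∪ V := hcover ▸ htw
      exact ⟨this.resolve_right htV, hd.notMem_of_mem_right ht₂⟩
    · rintro ⟨htU, ht₁⟩
      have htV : t ∈ Vᶜ := hUV.notMem_of_mem_left htU
      exact ⟨(hsub htV).resolve_left ht₁, htV⟩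
  have hclopen : IsClopen (c₂ ∩ Vᶜ) :=
    ⟨h₂.inter hV.isClosed_compl, heq ▸ hU.sdiff h₁⟩
  rcases isClopen_iff.1 hclopen with h | h
  · exact fun t ht => (hsub ht).resolve_right fun ht₂ => h.subset ⟨ht₂, ht⟩
  · exact absurd (h.symm.subset (mem_univ w)).1 (hd.notMem_of_mem_left hw)

theorem exists_isClopen_mem_disjoint_of_disjoint_connectedComponent [CompactSpace X]
    [T2Space X] {x : X} {S : Set X} (hS : IsClosed S) (hxS : Disjoint (connectedComponent x) S) :
    ∃ Z, IsClopen Z ∧ x ∈ Z ∧ Disjoint Z S := by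
  rw [connectedComponent_eq_iInter_isClopen, disjoint_iff_inter_eq_empty, inter_comm] at hxS
  obtain ⟨t, ht⟩ := hS.isCompact.elim_finite_subfamily_closed _ (fun Z => Z.2.1.isClosed) hxS
  refine ⟨⋂ Z ∈ t, Z.1, isClopen_biInter_finset fun Z _ => Z.2.1,
    mem_iInter₂.2 fun Z _ => Z.2.2, ?_⟩
  rw [disjoint_iff_inter_eq_empty, inter_comm, ht]

end Components

section BoundaryBumping

variable {X : Type*} [TopologicalSpace X] [CompactSpace X] [T2Space X] [PreconnectedSpace X]

theorem mem_closure_connectedComponentIn_compl_singleton {x z : X} (hxz : x ≠ z) :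
    z ∈ closure (connectedComponentIn {z}ᶜ x) := by
  set C := connectedComponentIn {z}ᶜ x
  by_contra hzC
  have hCcl : IsClosed C := closure_subset_iff_isClosed.1 fun t ht =>
    mem_connectedComponentIn_of_mem_closure ht fun htz => hzC (htz ▸ ht)
  obtain ⟨W, O, hW, hO, hzW, hCO, hWO⟩ := SeparatedNhds.of_isCompact_isCompact
    isCompact_singleton hCcl.isCompact
    (disjoint_singleton_left.2 fun h => hzC (subset_closure h))
  -- `C` is still the component of `x` in the compact set `F = Wᶜ`, where clopen sets separate it
  -- from the compact set `F \ O`.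
  set F := Wᶜ
  have hOF : O ⊆ F := hWO.subset_compl_left
  have hxF : x ∈ F := hOF (hCO (mem_connectedComponentIn hxz))
  have hCF : C = connectedComponentIn F x :=
    (isPreconnected_connectedComponentIn.subset_connectedComponentIn
      (mem_connectedComponentIn hxz) (hCO.trans hOF)).antisymm
      (isPreconnected_connectedComponentIn.subset_connectedComponentIn
        (mem_connectedComponentIn hxF) fun t ht (htz : t = z) =>
          connectedComponentIn_subset F x ht (htz ▸ hzW rfl))
  have : CompactSpace F := isCompact_iff_compactSpace.1 hW.isClosed_compl.isCompact
  obtain ⟨Z, hZ, hxZ, hZO⟩ := exists_isClopen_mem_disjoint_of_disjoint_connectedComponent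
    (x := ⟨x, hxF⟩) (hO.isClosed_compl.preimage continuous_subtype_val) <| by
      refine disjoint_left.2 fun t ht htO => htO (hCO ?_)
      rw [hCF, connectedComponentIn_eq_image hxF]
      exact mem_image_of_mem _ ht
  obtain ⟨G, hG, rfl⟩ := isOpen_induced_iff.1 hZ.isOpen
  have himage : Subtype.val '' (Subtype.val ⁻¹' G : Set F) = G ∩ O := by
    ext t
    constructor
    · rintro ⟨t, ht, rfl⟩
      exact ⟨ht, not_not.1 fun htO => hZO.notMem_of_mem_left ht htO⟩
    · rintro ⟨htG, htO⟩
      exact ⟨⟨t, hOF htO⟩, htG, rfl⟩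
  have hclopen : IsClopen (G ∩ O) :=
    ⟨himage ▸ hW.isClosed_compl.isClosedEmbedding_subtypeVal.isClosedMap _ hZ.isClosed,
      hG.inter hO⟩
  rcases isClopen_iff.1 hclopen with h | h
  · exact h.subset (himage ▸ mem_image_of_mem _ hxZ)
  · exact hWO.notMem_of_mem_left (hzW rfl) (h.symm.subset (mem_univ z)).2

end BoundaryBumping

def IsPointSeparated (X : Type*) [TopologicalSpace X] : Prop :=
  ∀ x y : X, x ≠ y → ∃ z : X, z ≠ x ∧ z ≠ y ∧
    connectedComponentIn ({z}ᶜ : Set X) x ≠ connectedComponentIn ({z}ᶜ : Set X) y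

namespace IsPointSeparated

variable {X : Type*} [TopologicalSpace X] [CompactSpace X] [T2Space X] [PreconnectedSpace X]

theorem isOpen_connectedComponentIn (hX : IsPointSeparated X) (z x : X) :
    IsOpen (connectedComponentIn {z}ᶜ x) := by
  rw [isOpen_iff_mem_nhds]
  intro y hy
  rw [connectedComponentIn_eq hy]
  have hyz : y ≠ z := connectedComponentIn_subset _ _ hy
  obtain ⟨s, hsy, hsz, hys⟩ := hX y z hyz
  set A := connectedComponentIn {s}ᶜ z
  -- A point whose component in `{z}ᶜ` differs from that of `s` lies in `A`: the closure of its
  -- component is preconnected, avoids `s` and contains `z` by boundary bumping.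
  have hA : ∀ t, t ≠ z → connectedComponentIn {z}ᶜ t ≠ connectedComponentIn {z}ᶜ s → t ∈ A := by
    intro t htz hts
    have hsC : s ∉ closure (connectedComponentIn {z}ᶜ t) := fun h =>
      hts (connectedComponentIn_eq (mem_connectedComponentIn_of_mem_closure h hsz))
    exact isPreconnected_connectedComponentIn.closure.subset_connectedComponentIn
      (mem_closure_connectedComponentIn_compl_singleton htz)
      (fun u hu (hus : u = s) => hsC (hus ▸ hu))
      (subset_closure (mem_connectedComponentIn htz))
  have hyA : y ∉ closure A := fun h =>
    hys (connectedComponentIn_eq (mem_connectedComponentIn_of_mem_closure h hsy.symm)).symm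
  have hN : (closure A)ᶜ ∩ {z}ᶜ ∈ 𝓝 y :=
    inter_mem (isClosed_closure.isOpen_compl.mem_nhds hyA) (isOpen_compl_singleton.mem_nhds hyz)
  have hNs : (closure A)ᶜ ∩ {z}ᶜ ⊆ connectedComponentIn {z}ᶜ s := by
    rintro t ⟨htA, htz⟩
    by_contra hts
    refine htA (subset_closure (hA t htz fun h => hts ?_))
    exact h ▸ mem_connectedComponentIn htz
  rw [← connectedComponentIn_eq (hNs (mem_of_mem_nhds hN))]
  exact mem_of_superset hN hNs

theorem eq_of_eventually_inter_nonempty (hX : IsPointSeparated X) {ι : Type*}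
    {l : Filter ι} [l.NeBot] {K L : ι → Set X} {g : ι → X} {p q : X}
    (hK : ∀ i, IsPreconnected (K i)) (hL : ∀ i, IsPreconnected (L i))
    (hKL : ∀ i, K i ∩ L i = {g i}) (hpK : ∀ i, p ∈ K i) (hgL : ∀ i, g i ∈ L i)
    (hg : Tendsto g l (𝓝 p))
    (hq : ∀ U, IsOpen U → q ∈ U → ∀ᶠ i in l, (K i ∩ U).Nonempty ∧ (L i ∩ U).Nonempty) :
    q = p := by
  by_contra hqp
  obtain ⟨z, hzp, hzq, hpq⟩ := hX p q (Ne.symm hqp)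
  set Cp := connectedComponentIn {z}ᶜ p
  set Cq := connectedComponentIn {z}ᶜ q
  have hmem : ∀ s : Set X, IsPreconnected s → (s ∩ Cp).Nonempty → (s ∩ Cq).Nonempty → z ∈ s :=
    fun s hs hsp hsq => not_not.1 fun hzs =>
      hpq (connectedComponentIn_eq_of_isPreconnected hs (fun t ht (htz : t = z) =>
        hzs (htz ▸ ht)) hsp hsq)
  have hgp : ∀ᶠ i in l, g i ∈ Cp :=
    hg ((hX.isOpen_connectedComponentIn z p).mem_nhds (mem_connectedComponentIn hzp.symm))
  obtain ⟨i, hgi, hKi, hLi⟩ := (hgp.and (hq Cq (hX.isOpen_connectedComponentIn z q)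
    (mem_connectedComponentIn hzq.symm))).exists
  -- `z` separates `p` from `q`, so it lies on both `K i` and `L i`, i.e. `z = g i ∈ Cp`.
  have hzg : z = g i := by
    rw [← mem_singleton_iff, ← hKL i]
    exact ⟨hmem _ (hK i) ⟨p, hpK i, mem_connectedComponentIn hzp.symm⟩ hKi,
      hmem _ (hL i) ⟨g i, hgL i, hgi⟩ hLi⟩
  exact connectedComponentIn_subset _ _ hgi hzg.symm

end IsPointSeparated

theorem TopologicalSpace.Closeds.isClosed_setOf_mem {X : Type*} [EMetricSpace X] :
    IsClosed {p : X × Closeds X | p.1 ∈ p.2} := by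
  have : {p : X × Closeds X | p.1 ∈ p.2} =
      (fun p => Metric.infEDist p.1 (p.2 : Set X)) ⁻¹' {0} := by
    ext ⟨x, s⟩
    exact Metric.mem_iff_infEDist_zero_of_closed s.isClosed
  exact this ▸ isClosed_singleton.preimage Closeds.continuous_infEDist

theorem TopologicalSpace.Closeds.mem_of_tendsto {X ι : Type*} [EMetricSpace X] {l : Filter ι}
    {x : ι → X} {y : X} {S : ι → Closeds X} {T : Closeds X} (hx : Tendsto x l (𝓝 y))
    (hS : Tendsto S l (𝓝 T)) (h : ∃ᶠ i in l, x i ∈ S i) : y ∈ T :=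
  isClosed_setOf_mem.mem_of_frequently_of_tendsto h (hx.prodMk_nhds hS)

theorem exists_mem_inter_ne_of_isPreconnected_compl_singleton {X : Type*} [TopologicalSpace X]
    {p a b : X} {K L : Set X} (hp : IsPreconnected ({p}ᶜ : Set X)) (hK : IsClosed K)
    (hL : IsClosed L) (hKL : K ∪ L = univ) (ha : a ∈ K) (hb : b ∈ L) (hap : a ≠ p)
    (hbp : b ≠ p) : ∃ q ∈ K ∩ L, q ≠ p := by
  by_contra! h
  have hcover : ({p}ᶜ : Set X) ⊆ Lᶜ ∪ Kᶜ := fun t htp => by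
    by_contra ht
    simp only [mem_union, mem_compl_iff, not_or, not_not] at ht
    exact htp (h t ⟨ht.2, ht.1⟩)
  have hdisj : Disjoint Lᶜ Kᶜ := disjoint_compl_left_iff.2 (compl_subset_iff_union.2 hKL)
  rcases hp.subset_or_subset hL.isOpen_compl hK.isOpen_compl hdisj hcover with h' | h'
  · exact h' hbp hb
  · exact h' hap ha

section FatCutPoints

variable {X : Type*} [MetricSpace X]

structure IsFatSplit (δ : ℝ) (w : X) (K L : Set X) : Prop where
  isClosed_left : IsClosed K
  isPreconnected_left : IsPreconnected K
  isClosed_right : IsClosed L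
  isPreconnected_right : IsPreconnected L
  union_eq : K ∪ L = univ
  inter_eq : K ∩ L = {w}
  exists_far_left : ∃ a ∈ K, δ ≤ dist a w
  exists_far_right : ∃ b ∈ L, δ ≤ dist b w

theorem IsFatSplit.symm {δ : ℝ} {w : X} {K L : Set X} (h : IsFatSplit δ w K L) :
    IsFatSplit δ w L K :=
  ⟨h.isClosed_right, h.isPreconnected_right, h.isClosed_left, h.isPreconnected_left,
    union_comm K L ▸ h.union_eq, inter_comm K L ▸ h.inter_eq, h.exists_far_right,
    h.exists_far_left⟩

theorem IsFatSplit.mono {δ δ' : ℝ} {w : X} {K L : Set X} (h : IsFatSplit δ w K L)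
    (hδ : δ' ≤ δ) : IsFatSplit δ' w K L :=
  { h with
    exists_far_left := h.exists_far_left.imp fun _ ⟨ha, had⟩ => ⟨ha, hδ.trans had⟩
    exists_far_right := h.exists_far_right.imp fun _ ⟨hb, hbd⟩ => ⟨hb, hδ.trans hbd⟩ }

variable (X) in
def fatCutPoints (δ : ℝ) : Set X :=
  {w | ∃ K L, IsFatSplit δ w K L}

theorem fatCutPoints_anti : Antitone (fatCutPoints X) :=
  fun _ _ hδ _ ⟨K, L, h⟩ => ⟨K, L, h.mono hδ⟩

theorem exists_isFatSplit_of_mem_fatCutPoints {δ : ℝ} {w : X} (hw : w ∈ fatCutPoints X δ)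
    (p : X) : ∃ K L, IsFatSplit δ w K L ∧ p ∈ K := by
  obtain ⟨K, L, h⟩ := hw
  rcases h.union_eq.symm.subset (mem_univ p) with hpK | hpL
  exacts [⟨K, L, h, hpK⟩, ⟨L, K, h.symm, hpL⟩]

theorem exists_mem_fatCutPoints_of_not_isPreconnected [PreconnectedSpace X] {q : X}
    (hq : ¬IsPreconnected ({q}ᶜ : Set X)) : ∃ δ > 0, q ∈ fatCutPoints X δ := by
  simp only [IsPreconnected, not_forall, exists_prop] at hq
  obtain ⟨u, v, hu, hv, hcover, ⟨a, haq, hau⟩, ⟨b, hbq, hbv⟩, huv⟩ := hq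
  set U := u ∩ {q}ᶜ
  set V := v ∩ {q}ᶜ
  have hUV : Disjoint U V := disjoint_left.2 fun t ⟨htu, htq⟩ ⟨htv, _⟩ => huv ⟨t, htq, htu, htv⟩
  have hUV_eq : U ∪ V = {q}ᶜ := by
    rw [← union_inter_distrib_right, inter_eq_right.2 hcover]
  refine ⟨min (dist a q) (dist b q), lt_min (dist_pos.2 haq) (dist_pos.2 hbq), Vᶜ, Uᶜ,
    hv.inter isOpen_compl_singleton |>.isClosed_compl,
    isPreconnected_compl_of_union_eq_compl_singleton (hu.inter isOpen_compl_singleton)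
      (hv.inter isOpen_compl_singleton) hUV hUV_eq,
    hu.inter isOpen_compl_singleton |>.isClosed_compl,
    isPreconnected_compl_of_union_eq_compl_singleton (hv.inter isOpen_compl_singleton)
      (hu.inter isOpen_compl_singleton) hUV.symm (union_comm U V ▸ hUV_eq),
    ?_, ?_, ⟨a, hUV.notMem_of_mem_left ⟨hau, haq⟩, min_le_left _ _⟩,
    ⟨b, hUV.notMem_of_mem_right ⟨hbv, hbq⟩, min_le_right _ _⟩⟩
  · rw [← compl_inter, hUV.symm.inter_eq, compl_empty]
  · rw [← compl_union, union_comm, hUV_eq, compl_compl]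

end FatCutPoints

theorem IsPointSeparated.notMem_closure_fatCutPoints {X : Type*} [MetricSpace X]
    [CompactSpace X] [PreconnectedSpace X] (hX : IsPointSeparated X) {δ : ℝ} (hδ : 0 < δ)
    {p : X} (hp : IsPreconnected ({p}ᶜ : Set X)) : p ∉ closure (fatCutPoints X δ) := by
  intro hpF
  obtain ⟨g, hgF, hg⟩ := mem_closure_iff_seq_limit.1 hpF
  choose K L hKL hpK using fun k => exists_isFatSplit_of_mem_fatCutPoints (hgF k) p
  choose a haK had using fun k => (hKL k).exists_far_left
  choose b hbL hbd using fun k => (hKL k).exists_far_right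
  let K' : ℕ → Closeds X := fun k => ⟨K k, (hKL k).isClosed_left⟩
  let L' : ℕ → Closeds X := fun k => ⟨L k, (hKL k).isClosed_right⟩
  obtain ⟨⟨KK, LL, A, B⟩, -, φ, hφ, hlim⟩ := isCompact_univ.tendsto_subseq
    (x := fun k => (K' k, L' k, a k, b k)) fun _ => mem_univ _
  have hKK : Tendsto (K' ∘ φ) atTop (𝓝 KK) := hlim.fst_nhds
  have hLL : Tendsto (L' ∘ φ) atTop (𝓝 LL) := hlim.snd_nhds.fst_nhds
  have hA : Tendsto (a ∘ φ) atTop (𝓝 A) := hlim.snd_nhds.snd_nhds.fst_nhds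
  have hB : Tendsto (b ∘ φ) atTop (𝓝 B) := hlim.snd_nhds.snd_nhds.snd_nhds
  have hgφ : Tendsto (g ∘ φ) atTop (𝓝 p) := hg.comp hφ.tendsto_atTop
  have hcover : (KK : Set X) ∪ LL = univ := eq_univ_of_forall fun x => by
    have hx : ∃ᶠ k in atTop, x ∈ K' (φ k) ∨ x ∈ L' (φ k) :=
      Frequently.of_forall fun k => (hKL (φ k)).union_eq.symm.subset (mem_univ x)
    rcases frequently_or_distrib.1 hx with h | h
    exacts [.inl (Closeds.mem_of_tendsto tendsto_const_nhds hKK h),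
      .inr (Closeds.mem_of_tendsto tendsto_const_nhds hLL h)]
  have hfar : ∀ {x : ℕ → X} {y : X}, Tendsto (x ∘ φ) atTop (𝓝 y) →
      (∀ k, δ ≤ dist (x k) (g k)) → y ≠ p := fun hx hxd hyp => hδ.not_ge <| by
    simpa [hyp] using ge_of_tendsto (hx.dist hgφ) (Eventually.of_forall fun k => hxd (φ k))
  obtain ⟨q, ⟨hqK, hqL⟩, hqp⟩ := exists_mem_inter_ne_of_isPreconnected_compl_singleton hp
    KK.isClosed LL.isClosed hcover
    (Closeds.mem_of_tendsto hA hKK (Frequently.of_forall fun k => haK (φ k)))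
    (Closeds.mem_of_tendsto hB hLL (Frequently.of_forall fun k => hbL (φ k)))
    (hfar hA had) (hfar hB hbd)
  refine hqp (hX.eq_of_eventually_inter_nonempty (l := atTop) (K := K ∘ φ) (L := L ∘ φ)
    (fun k => (hKL (φ k)).isPreconnected_left) (fun k => (hKL (φ k)).isPreconnected_right)
    (fun k => (hKL (φ k)).inter_eq) (fun k => hpK (φ k)) (fun k => ?_) hgφ fun U hU hqU => ?_)
  · exact ((hKL (φ k)).inter_eq.symm.subset rfl).2
  · have hUo := Closeds.isOpen_inter_nonempty_of_isOpen hU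
    exact (hKK.eventually (hUo.mem_nhds ⟨q, hqK, hqU⟩)).and
      (hLL.eventually (hUo.mem_nhds ⟨q, hqL, hqU⟩))

/-- If the endpoints of a dendrite are dense, then they form a residual set. -/
theorem stmt0 {D : Type*} [MetricSpace D] [CompactSpace D] [ConnectedSpace D]
    (hD : IsDendrite D) (hdense : Dense {p : D | IsEndpointOf D p}) :
    {p : D | IsEndpointOf D p} ∈ residual D := by
  set F : ℕ → Set D := fun n => closure (fatCutPoints D (1 / (n + 1)))
  have hEF : ∀ n, {p : D | IsEndpointOf D p} ⊆ (F n)ᶜ := fun _ _ hp =>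
    IsPointSeparated.notMem_closure_fatCutPoints hD.2 Nat.one_div_pos_of_nat hp
  refine mem_residual_iff.2 ⟨range fun n => (F n)ᶜ, ?_, ?_, countable_range _, ?_⟩
  · rintro _ ⟨n, rfl⟩
    exact isClosed_closure.isOpen_compl
  · rintro _ ⟨n, rfl⟩
    exact hdense.mono (hEF n)
  · intro q hq
    by_contra hqE
    obtain ⟨δ, hδ, hqδ⟩ := exists_mem_fatCutPoints_of_not_isPreconnected hqE
    obtain ⟨n, hn⟩ := exists_nat_one_div_lt hδ
    exact mem_sInter.1 hq _ ⟨n, rfl⟩ (subset_closure (fatCutPoints_anti hn.le hqδ))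
end

section
/- Let (X,f) be a dynamical system on a compact metric space X. If f is totally transitive and the set Per(f) of periodic points of f is dense in X, then f is weakly mixing. -/
open Set Topology Filter TopologicalSpace

/-- A totally transitive map with dense periodic points is weakly mixing. -/
theorem stmt8 {X : Type*} [MetricSpace X] [CompactSpace X]
    {f : X → X} (hf : Continuous f) (htt : TotallyTransitive f)
    (hper : Dense {p : X | IsPeriodic f p}) :
    WeaklyMixing f := by
  have htrans : TopTransitive f := by
    have h := htt 1 le_rfl
    simpa using h
  -- f is surjective
  have hsurj : Function.Surjective f := by
    by_contra h
    have hUopen : IsOpen (Set.range f)ᶜ := (isCompact_range hf).isClosed.isOpen_compl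
    have hUne : (Set.range f)ᶜ.Nonempty := by
      rw [Set.nonempty_compl]
      intro hr
      exact h (Set.range_eq_univ.mp hr)
    obtain ⟨n, hn, x, ⟨x0, _, hx0⟩, hxU⟩ := htrans _ _ hUopen hUopen hUne hUne
    apply hxU
    obtain ⟨m, rfl⟩ := Nat.exists_eq_succ_of_ne_zero hn.ne'
    rw [← hx0, Function.iterate_succ_apply']
    exact ⟨_, rfl⟩
  intro U V hU hV hUne hVne
  obtain ⟨⟨a, b⟩, hab⟩ := hUne
  obtain ⟨⟨c, d⟩, hcd⟩ := hVne
  obtain ⟨U1, U2, hU1, hU2, ha, hb, hUsub⟩ := isOpen_prod_iff.mp hU a b hab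
  obtain ⟨V1, V2, hV1, hV2, hc, hd, hVsub⟩ := isOpen_prod_iff.mp hV c d hcd
  obtain ⟨k, hk, x, ⟨x0, hx0U, hx0⟩, hxV⟩ := htrans U1 V1 hU1 hV1 ⟨a, ha⟩ ⟨c, hc⟩
  set U1' := U1 ∩ f^[k] ⁻¹' V1 with hU1'def
  have hU1'open : IsOpen U1' := hU1.inter (hV1.preimage (hf.iterate k))
  have hU1'ne : U1'.Nonempty := ⟨x0, hx0U, by simp only [Set.mem_preimage, hx0]; exact hxV⟩
  obtain ⟨p, hpPer, hpU⟩ := hper.exists_mem_open hU1'open hU1'ne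
  obtain ⟨r, hr, hpr⟩ := hpPer
  have hWopen : IsOpen (f^[k] ⁻¹' V2) := hV2.preimage (hf.iterate k)
  have hWne : (f^[k] ⁻¹' V2).Nonempty := by
    obtain ⟨z, hz⟩ := (hsurj.iterate k) d
    exact ⟨z, by simp [Set.mem_preimage, hz, hd]⟩
  obtain ⟨t, ht, y, ⟨y0, hy0, hy0'⟩, hyW⟩ :=
    htt r hr U2 (f^[k] ⁻¹' V2) hU2 hWopen ⟨b, hb⟩ hWne
  refine ⟨k + r * t, by positivity, (f^[k + r * t] p, f^[k + r * t] y0), ⟨(p, y0), ?_, ?_⟩, ?_⟩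
  · exact hUsub ⟨hpU.1, hy0⟩
  · rw [Prod.map_iterate]; rfl
  · apply hVsub
    constructor
    · show f^[k + r * t] p ∈ V1
      have : f^[r * t] p = p := by
        rw [Function.iterate_mul]
        exact Function.iterate_fixed hpr t
      rw [Function.iterate_add_apply, this]
      exact hpU.2
    · show f^[k + r * t] y0 ∈ V2
      have : f^[r * t] y0 = y := by rw [Function.iterate_mul]; exact hy0'
      rw [Function.iterate_add_apply, this]
      exact hyW
end

section
/- Let D be a dendrite and f : D → D a totally transitive continuous map such that Per(f) \ End(D) is dense in D. Then f is (topologically) mixing. -/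
open Set Topology Filter TopologicalSpace

set_option linter.unusedSectionVars false
set_option maxHeartbeats 1000000

/-! ### Auxiliary topology: dendrites (in the component-separation sense) are
locally connected.  We prove: components of open subsets are open. -/

section AuxGeneral
variable {α : Type*} [TopologicalSpace α]

/-- A closure point of a component of `O` that lies in `O` is in the component. -/
lemma mem_ccIn_of_mem_closure {O : Set α} {x p : α}
    (hp : p ∈ closure (connectedComponentIn O x)) (hpO : p ∈ O) (hx : x ∈ O) :
    p ∈ connectedComponentIn O x := by
  have hCpre : IsPreconnected (connectedComponentIn O x) := isPreconnected_connectedComponentIn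
  have hTpre : IsPreconnected (insert p (connectedComponentIn O x)) :=
    hCpre.subset_closure (subset_insert _ _) (insert_subset hp subset_closure)
  have hsub : insert p (connectedComponentIn O x) ⊆ connectedComponentIn O x :=
    hTpre.subset_connectedComponentIn (mem_insert_of_mem _ (mem_connectedComponentIn hx))
      (insert_subset hpO (connectedComponentIn_subset _ _))
  exact hsub (mem_insert _ _)

/-- Šura-Bura style separation: in a compact T2 space, the connected component of a point
can be engulfed by a clopen set avoiding a disjoint closed set. -/
lemma exists_isClopen_of_disjoint_closed {Y : Type*} [TopologicalSpace Y] [CompactSpace Y]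
    [T2Space Y] (x : Y) {F : Set Y} (hF : IsClosed F) (hd : connectedComponent x ∩ F = ∅) :
    ∃ W : Set Y, IsClopen W ∧ connectedComponent x ⊆ W ∧ W ∩ F = ∅ := by
  have hiter := connectedComponent_eq_iInter_isClopen x
  have hchoice : ∀ y : F, ∃ Z : { s : Set Y // IsClopen s ∧ x ∈ s }, (y : Y) ∉ (Z : Set Y) := by
    intro y
    by_contra hcon
    push_neg at hcon
    have : (y : Y) ∈ connectedComponent x := by
      rw [hiter, mem_iInter]; exact hcon
    exact absurd hd (by
      apply Set.Nonempty.ne_empty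
      exact ⟨y, this, y.2⟩)
  choose Z hZ using hchoice
  have hFc : IsCompact F := hF.isCompact
  have hcover : F ⊆ ⋃ y : F, ((Z y : Set Y))ᶜ := by
    intro p hp
    exact mem_iUnion.mpr ⟨⟨p, hp⟩, hZ ⟨p, hp⟩⟩
  obtain ⟨t, ht⟩ := hFc.elim_finite_subcover (fun y : F => ((Z y : Set Y))ᶜ)
    (fun y => (Z y).2.1.compl.isOpen) hcover
  refine ⟨⋂ y ∈ t, (Z y : Set Y), ?_, ?_, ?_⟩
  · exact isClopen_biInter_finset (fun y _ => (Z y).2.1)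
  · intro p hp
    simp only [mem_iInter]
    intro y _
    rw [hiter] at hp
    exact mem_iInter.mp hp (Z y)
  · rw [eq_empty_iff_forall_notMem]
    rintro p ⟨hpW, hpF⟩
    obtain ⟨y, hyt, hy⟩ := mem_iUnion₂.mp (ht hpF)
    exact hy (by exact (mem_iInter₂.mp hpW) y hyt)

end AuxGeneral

/-- The separation property of a dendrite. -/
def SepProp (D : Type*) [TopologicalSpace D] : Prop :=
  ∀ x y : D, x ≠ y → ∃ z : D, z ≠ x ∧ z ≠ y ∧
    connectedComponentIn ({z}ᶜ : Set D) x ≠ connectedComponentIn ({z}ᶜ : Set D) y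

section AuxContinuum
variable {D : Type*} [MetricSpace D] [CompactSpace D] [ConnectedSpace D]

/-- Boundary bumping: in a continuum, the closure of a connected component of a proper
open set meets the complement of that set. -/
lemma bb_closure_not_subset {O : Set D} (hO : IsOpen O) (hne : O ≠ univ) {x : D} (hx : x ∈ O) :
    ∃ z, z ∈ closure (connectedComponentIn O x) ∧ z ∉ O := by
  by_contra hcon
  push_neg at hcon
  set C := connectedComponentIn O x with hCdef
  have hclsub : closure C ⊆ O := fun z hz => hcon z hz
  have hCcl : closure C = C := by
    apply Subset.antisymm _ subset_closure
    intro z hz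
    exact mem_ccIn_of_mem_closure hz (hclsub hz) hx
  have hCclosed : IsClosed C := hCcl ▸ isClosed_closure
  obtain ⟨H, G, hHopen, hGopen, hCH, hOG, hHG⟩ :=
    normal_separation hCclosed (hO.isClosed_compl)
      (by
        rw [Set.disjoint_iff_inter_eq_empty, eq_empty_iff_forall_notMem]
        rintro p ⟨hp1, hp2⟩
        exact hp2 (connectedComponentIn_subset _ _ hp1))
  set Y : Set D := Gᶜ with hYdef
  have hYclosed : IsClosed Y := hGopen.isClosed_compl
  have hCG : C ⊆ Y := fun p hp => (disjoint_left.mp hHG (hCH hp))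
  have hYO : Y ⊆ O := fun p hp => by
    by_contra hpO
    exact hp (hOG hpO)
  have hxY : x ∈ Y := hCG (mem_connectedComponentIn hx)
  have hCY : connectedComponentIn Y x = C := by
    apply Subset.antisymm
    · exact (connectedComponentIn_mono x hYO)
    · exact isPreconnected_connectedComponentIn.subset_connectedComponentIn
        (mem_connectedComponentIn hx) hCG
  haveI : CompactSpace Y := isCompact_iff_compactSpace.mp (hYclosed.isCompact)
  have himg : connectedComponentIn Y x = Subtype.val '' connectedComponent (⟨x, hxY⟩ : Y) :=
    connectedComponentIn_eq_image hxY
  have hclGH : closure G ∩ H = ∅ := by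
    have : G ⊆ Hᶜ := disjoint_right.mp hHG
    have h2 : closure G ⊆ Hᶜ := closure_minimal this hHopen.isClosed_compl
    rw [eq_empty_iff_forall_notMem]
    rintro p ⟨hp1, hp2⟩
    exact h2 hp1 hp2
  have hdisj : connectedComponent (⟨x, hxY⟩ : Y) ∩ (Subtype.val ⁻¹' closure G) = ∅ := by
    rw [eq_empty_iff_forall_notMem]
    rintro p ⟨hp1, hp2⟩
    have hpC : (p : D) ∈ C := by
      rw [← hCY, himg]; exact ⟨p, hp1, rfl⟩
    have : (p : D) ∈ closure G ∩ H := ⟨hp2, hCH hpC⟩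
    rw [hclGH] at this
    exact this
  obtain ⟨W', hW'clopen, hW'sub, hW'disj⟩ :=
    exists_isClopen_of_disjoint_closed (⟨x, hxY⟩ : Y)
      (isClosed_closure.preimage continuous_subtype_val) hdisj
  set W : Set D := Subtype.val '' W' with hWdef
  have hWY : W ⊆ Y := by rintro p ⟨p', _, rfl⟩; exact p'.2
  have hWclG : W ∩ closure G = ∅ := by
    rw [eq_empty_iff_forall_notMem]
    rintro p ⟨⟨p', hp', rfl⟩, hp2⟩
    have : p' ∈ W' ∩ (Subtype.val ⁻¹' closure G) := ⟨hp', hp2⟩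
    rw [hW'disj] at this
    exact this
  have hWclosed : IsClosed W := by
    have : IsCompact W' := hW'clopen.1.isCompact
    exact (this.image continuous_subtype_val).isClosed
  have hWopen : IsOpen W := by
    obtain ⟨O', hO'open, hO'pre⟩ := isOpen_induced_iff.mp hW'clopen.2
    have : W = O' ∩ (closure G)ᶜ := by
      apply Subset.antisymm
      · rintro p ⟨p', hp', rfl⟩
        refine ⟨?_, ?_⟩
        · rw [← hO'pre] at hp'; exact hp'
        · intro hpc
          have : (p' : D) ∈ W ∩ closure G := ⟨⟨p', hp', rfl⟩, hpc⟩
          rw [hWclG] at this; exact this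
      · rintro p ⟨hp1, hp2⟩
        have hpY : p ∈ Y := fun hpG => hp2 (subset_closure hpG)
        have : (⟨p, hpY⟩ : Y) ∈ W' := by rw [← hO'pre]; exact hp1
        exact ⟨⟨p, hpY⟩, this, rfl⟩
    rw [this]
    exact hO'open.inter (isOpen_compl_iff.mpr isClosed_closure)
  have hWclopen : IsClopen W := ⟨hWclosed, hWopen⟩
  rcases isClopen_iff.mp hWclopen with hemp | huniv
  · have : x ∈ W := ⟨⟨x, hxY⟩, hW'sub mem_connectedComponent, rfl⟩
    rw [hemp] at this
    exact this
  · obtain ⟨o, ho⟩ := (ne_univ_iff_exists_notMem O).mp hne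
    have hoW : o ∈ W := huniv ▸ mem_univ o
    exact (hWY hoW) (hOG ho)

/-- Sequence witnessing failure of `connectedComponentIn O x' ∈ 𝓝 x'`. -/
lemma exists_seq_outside {O : Set D} (hO : IsOpen O) {x' : D} (hx' : x' ∈ O)
    (hnot : ¬ connectedComponentIn O x' ∈ 𝓝 x') :
    ∃ p : ℕ → D, (∀ k, p k ∈ O ∧ p k ∉ connectedComponentIn O x') ∧
      Tendsto p atTop (𝓝 x') := by
  obtain ⟨ε₀, hε₀, hball⟩ := Metric.isOpen_iff.mp hO x' hx'
  have hk : ∀ k : ℕ, ∃ p, p ∈ Metric.ball x' (min ε₀ (1/(k+1))) ∧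
      p ∉ connectedComponentIn O x' := by
    intro k
    by_contra hcon
    push_neg at hcon
    apply hnot
    have hpos : (0:ℝ) < min ε₀ (1/(k+1)) := lt_min hε₀ (by positivity)
    apply Filter.mem_of_superset (Metric.ball_mem_nhds x' hpos)
    intro p hp
    exact hcon p hp
  choose p hp1 hp2 using hk
  refine ⟨p, fun k => ⟨hball (Metric.ball_subset_ball (min_le_left _ _) (hp1 k)), hp2 k⟩, ?_⟩
  rw [tendsto_iff_dist_tendsto_zero]
  apply squeeze_zero (fun k => dist_nonneg)
    (fun k => le_of_lt (lt_of_lt_of_le (hp1 k) (min_le_right _ _)))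
  exact tendsto_one_div_add_atTop_nhds_zero_nat

/-- Components of complements of points are open in a (component-)dendrite continuum. -/
lemma isOpen_ccIn_compl_singleton (hD2 : SepProp D) (z x : D) :
    IsOpen (connectedComponentIn ({z}ᶜ : Set D) x) := by
  by_cases hxz : x ∈ ({z}ᶜ : Set D)
  swap
  · rw [connectedComponentIn_eq_empty hxz]; exact isOpen_empty
  rw [isOpen_iff_mem_nhds]
  intro x' hx'
  rw [connectedComponentIn_eq hx']
  set O : Set D := {z}ᶜ with hOdef
  have hO : IsOpen O := isOpen_compl_singleton
  have hx'O : x' ∈ O := connectedComponentIn_subset _ _ hx'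
  by_contra hnot
  obtain ⟨p, hp, htend⟩ := exists_seq_outside hO hx'O hnot
  set C := connectedComponentIn O x' with hCdef
  have hx'z : x' ≠ z := hx'O
  obtain ⟨y, hyx', hyz, hyne⟩ := hD2 x' z hx'z
  set compk := fun k => connectedComponentIn O (p k) with hcompdef
  by_cases hb : ∃ᶠ k in atTop, y ∈ compk k
  · have hfreq : ∃ᶠ k in atTop, p k ∈ connectedComponentIn O y := by
      apply hb.mono
      intro k hk
      rw [← connectedComponentIn_eq hk]
      exact mem_connectedComponentIn (hp k).1
    have hx'cl : x' ∈ closure (connectedComponentIn O y) :=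
      mem_closure_of_frequently_of_tendsto hfreq htend
    have hyO : y ∈ O := by rw [hOdef]; simpa using hyz
    have hx'mem : x' ∈ connectedComponentIn O y := mem_ccIn_of_mem_closure hx'cl hx'O hyO
    have heq : connectedComponentIn O y = C := connectedComponentIn_eq hx'mem
    obtain ⟨k, hk⟩ := hfreq.exists
    rw [heq] at hk
    exact (hp k).2 hk
  · have hev : ∀ᶠ k in atTop, y ∉ compk k := by
      rw [← Filter.not_frequently]; exact hb
    have hzcl : ∀ k, z ∈ closure (compk k) := by
      intro k
      obtain ⟨w, hw1, hw2⟩ := bb_closure_not_subset hO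
        (by rw [ne_univ_iff_exists_notMem]; exact ⟨z, by rw [hOdef]; simp⟩) (hp k).1
      have : w = z := by
        rw [hOdef] at hw2; simpa using hw2
      rw [← this]; exact hw1
    set Dk := fun k => insert z (compk k) with hDkdef
    have hDkpre : ∀ k, IsPreconnected (Dk k) := by
      intro k
      exact isPreconnected_connectedComponentIn.subset_closure (subset_insert _ _)
        (insert_subset (hzcl k) subset_closure)
    have hzy : z ∈ ({y}ᶜ : Set D) := by simpa using fun h => hyz h.symm
    set Z := connectedComponentIn ({y}ᶜ : Set D) z with hZdef
    have hDkZ : ∀ᶠ k in atTop, Dk k ⊆ Z := by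
      apply hev.mono
      intro k hk
      apply (hDkpre k).subset_connectedComponentIn (mem_insert _ _)
      intro w hw
      rcases hw with rfl | hw
      · exact hzy
      · simp only [mem_compl_iff, mem_singleton_iff]
        rintro rfl
        exact hk hw
    have hpZ : ∃ᶠ k in atTop, p k ∈ Z := by
      apply Filter.Eventually.frequently
      apply hDkZ.mono
      intro k hk
      exact hk (mem_insert_of_mem _ (mem_connectedComponentIn (hp k).1))
    have hx'cl : x' ∈ closure Z := mem_closure_of_frequently_of_tendsto hpZ htend
    have hx'y : x' ∈ ({y}ᶜ : Set D) := by simpa using fun h => hyx' h.symm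
    have hx'Z : x' ∈ Z := mem_ccIn_of_mem_closure hx'cl hx'y hzy
    exact hyne (connectedComponentIn_eq hx'Z).symm

/-- Local connectedness: components of open sets are open. -/
lemma isOpen_ccIn (hD2 : SepProp D) {O : Set D} (hO : IsOpen O) (x : D) :
    IsOpen (connectedComponentIn O x) := by
  by_cases hxO : x ∈ O
  swap
  · rw [connectedComponentIn_eq_empty hxO]; exact isOpen_empty
  by_cases hOuniv : O = univ
  · subst hOuniv
    rw [connectedComponentIn_univ]
    rw [PreconnectedSpace.connectedComponent_eq_univ]
    exact isOpen_univ
  rw [isOpen_iff_mem_nhds]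
  intro x' hx'
  rw [connectedComponentIn_eq hx']
  have hx'O : x' ∈ O := connectedComponentIn_subset _ _ hx'
  by_contra hnot
  obtain ⟨p, hp, htend⟩ := exists_seq_outside hO hx'O hnot
  set C := connectedComponentIn O x' with hCdef
  set compk := fun k => connectedComponentIn O (p k) with hcompdef
  have hzk : ∀ k, ∃ zk, zk ∈ closure (compk k) ∧ zk ∉ O := fun k =>
    bb_closure_not_subset hO hOuniv (hp k).1
  choose zk hzk1 hzk2 using hzk
  have hOc : IsCompact (Oᶜ : Set D) := hO.isClosed_compl.isCompact
  obtain ⟨zs, hzsO, φ, hφ, hφtend⟩ := hOc.tendsto_subseq hzk2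
  have hqtend : Tendsto (fun k => p (φ k)) atTop (𝓝 x') :=
    htend.comp hφ.tendsto_atTop
  have hx'zs : x' ≠ zs := fun h => hzsO (h ▸ hx'O)
  obtain ⟨y, hyx', hyzs, hyne⟩ := hD2 x' zs hx'zs
  by_cases hb : ∃ᶠ k in atTop, y ∈ compk (φ k)
  · have hfreq : ∃ᶠ k in atTop, p (φ k) ∈ connectedComponentIn O y := by
      apply hb.mono
      intro k hk
      rw [← connectedComponentIn_eq hk]
      exact mem_connectedComponentIn (hp (φ k)).1
    have hyO : y ∈ O := by
      obtain ⟨k, hk⟩ := hb.exists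
      exact connectedComponentIn_subset _ _ hk
    have hx'mem : x' ∈ connectedComponentIn O y :=
      mem_ccIn_of_mem_closure (mem_closure_of_frequently_of_tendsto hfreq hqtend) hx'O hyO
    have heq : connectedComponentIn O y = C := connectedComponentIn_eq hx'mem
    obtain ⟨k, hk⟩ := hfreq.exists
    rw [heq] at hk
    exact (hp (φ k)).2 hk
  by_cases ha : ∃ᶠ k in atTop, y = zk (φ k)
  · have : y = zs := by
      by_contra hne
      have hdist : 0 < dist y zs := dist_pos.mpr hne
      have hev : ∀ᶠ k in atTop, dist (zk (φ k)) zs < dist y zs :=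
        hφtend (Metric.ball_mem_nhds zs hdist)
      obtain ⟨k, hk1, hk2⟩ := (ha.and_eventually hev).exists
      rw [← hk1] at hk2
      exact lt_irrefl _ hk2
    exact hyzs this
  have hev1 : ∀ᶠ k in atTop, y ∉ compk (φ k) := by rw [← Filter.not_frequently]; exact hb
  have hev2 : ∀ᶠ k in atTop, y ≠ zk (φ k) := by rw [← Filter.not_frequently]; exact ha
  have hzsy : zs ∈ ({y}ᶜ : Set D) := by simpa using fun h => hyzs h.symm
  set Z := connectedComponentIn ({y}ᶜ : Set D) zs with hZdef
  have hZopen : IsOpen Z := isOpen_ccIn_compl_singleton hD2 y zs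
  have hzsZ : zs ∈ Z := mem_connectedComponentIn hzsy
  have hev3 : ∀ᶠ k in atTop, zk (φ k) ∈ Z := hφtend (hZopen.mem_nhds hzsZ)
  have hDkpre : ∀ k, IsPreconnected (insert (zk (φ k)) (compk (φ k))) := fun k =>
    isPreconnected_connectedComponentIn.subset_closure (subset_insert _ _)
      (insert_subset (hzk1 (φ k)) subset_closure)
  have hpZ : ∀ᶠ k in atTop, p (φ k) ∈ Z := by
    filter_upwards [hev1, hev2, hev3] with k h1 h2 h3
    have hsub : insert (zk (φ k)) (compk (φ k)) ⊆ Z := by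
      have h4 : insert (zk (φ k)) (compk (φ k)) ⊆ ({y}ᶜ : Set D) := by
        intro w hw
        rcases hw with rfl | hw
        · simpa using fun h => h2 h.symm
        · simp only [mem_compl_iff, mem_singleton_iff]
          rintro rfl
          exact h1 hw
      have h5 := (hDkpre k).subset_connectedComponentIn (mem_insert _ _) h4
      rw [← connectedComponentIn_eq h3] at h5; exact h5
    exact hsub (mem_insert_of_mem _ (mem_connectedComponentIn (hp (φ k)).1))
  have hx'y : x' ∈ ({y}ᶜ : Set D) := by simpa using fun h => hyx' h.symm
  have hx'Z : x' ∈ Z :=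
    mem_ccIn_of_mem_closure
      (mem_closure_of_frequently_of_tendsto hpZ.frequently hqtend) hx'y hzsy
  exact hyne (connectedComponentIn_eq hx'Z).symm

end AuxContinuum

lemma iterate_fixed_of_dvd {X : Type*} {f : X → X} {q : X} {a n : ℕ}
    (h : f^[a] q = q) (hd : a ∣ n) : f^[n] q = q := by
  obtain ⟨t, rfl⟩ := hd
  rw [Function.iterate_mul]
  exact Function.iterate_fixed h t


/-- A totally transitive dendrite map whose non-endpoint periodic points
are dense is mixing. -/
theorem stmt9 {D : Type*} [MetricSpace D] [CompactSpace D] [ConnectedSpace D]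
    (hD : IsDendrite D) {f : D → D} (hf : Continuous f) (htt : TotallyTransitive f)
    (hper : Dense {p : D | IsPeriodic f p ∧ ¬ IsEndpointOf D p}) :
    TopMixing f := by
  -- f is surjective
  have hsurj : Function.Surjective f := by
    intro v
    by_contra hcon
    push_neg at hcon
    have hRclosed : IsClosed (Set.range f) := (isCompact_range hf).isClosed
    have hOopen : IsOpen ((Set.range f)ᶜ) := hRclosed.isOpen_compl
    have hOne : ((Set.range f)ᶜ).Nonempty := ⟨v, fun ⟨u, hu⟩ => hcon u hu⟩
    obtain ⟨n, hn0, ⟨ξ, ⟨u, -, hu⟩, hξ⟩⟩ := htt 1 le_rfl univ _ isOpen_univ hOopen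
      univ_nonempty hOne
    rw [Function.iterate_one] at hu
    apply hξ
    obtain ⟨n', rfl⟩ : ∃ n', n = n' + 1 := ⟨n - 1, by omega⟩
    rw [← hu, Function.iterate_succ_apply']
    exact ⟨f^[n'] u, rfl⟩
  intro U V hU hV hUne hVne
  -- the open connected set C ⊆ U with a periodic point q
  obtain ⟨x₀, hx₀⟩ := hUne
  set C := connectedComponentIn U x₀ with hCdef
  have hCopen : IsOpen C := isOpen_ccIn hD.2 hU x₀
  have hCsub : C ⊆ U := connectedComponentIn_subset _ _
  have hCne : C.Nonempty := ⟨x₀, mem_connectedComponentIn hx₀⟩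
  have hCpre : IsPreconnected C := isPreconnected_connectedComponentIn
  obtain ⟨q, ⟨⟨a, ha1, hqa⟩, -⟩, hqC⟩ := hper.exists_mem_open hCopen hCne
  -- periodic non-endpoint w ∈ V
  obtain ⟨w, ⟨⟨b, hb1, hwb⟩, hwend⟩, hwV⟩ := hper.exists_mem_open hV hVne
  -- unpack the cut-point structure at w
  rw [IsEndpointOf, IsPreconnected] at hwend
  push_neg at hwend
  obtain ⟨u, v, huo, hvo, hcover, hune, hvne, hempty⟩ := hwend
  set P : Set D := u ∩ {w}ᶜ with hPdef
  set Q : Set D := v ∩ {w}ᶜ with hQdef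
  have hPopen : IsOpen P := huo.inter isOpen_compl_singleton
  have hQopen : IsOpen Q := hvo.inter isOpen_compl_singleton
  have hPne : P.Nonempty := by obtain ⟨ξ, h1, h2⟩ := hune; exact ⟨ξ, h2, h1⟩
  have hQne : Q.Nonempty := by obtain ⟨ξ, h1, h2⟩ := hvne; exact ⟨ξ, h2, h1⟩
  have hPQcover : ∀ ξ : D, ξ ≠ w → ξ ∈ P ∪ Q := by
    intro ξ hξ
    have hξc : ξ ∈ ({w}ᶜ : Set D) := hξ
    rcases hcover hξc with h | h
    · exact Or.inl ⟨h, hξc⟩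
    · exact Or.inr ⟨h, hξc⟩
  have hPQempty : ({w}ᶜ : Set D) ∩ (u ∩ v) = ∅ := hempty
  -- the bridging lemma: a preconnected set meeting both sides of `w` contains `w`
  have bridge : ∀ S : Set D, IsPreconnected S → (S ∩ P).Nonempty → (S ∩ Q).Nonempty →
      w ∈ S := by
    intro S hS h1 h2
    by_contra hwS
    have hsub : S ⊆ u ∪ v := by
      intro ξ hξ
      have : ξ ∈ ({w}ᶜ : Set D) := fun h => hwS (by rwa [← mem_singleton_iff.mp h])
      exact hcover this
    have h1' : (S ∩ u).Nonempty := h1.mono (inter_subset_inter_right S (inter_subset_left))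
    have h2' : (S ∩ v).Nonempty := h2.mono (inter_subset_inter_right S (inter_subset_left))
    obtain ⟨ξ, hξS, hξuv⟩ := hS u v huo hvo hsub h1' h2'
    have hξw : ξ ∈ ({w}ᶜ : Set D) := fun h => hwS (by rwa [← mem_singleton_iff.mp h])
    have : ξ ∈ ({w}ᶜ : Set D) ∩ (u ∩ v) := ⟨hξw, hξuv⟩
    rw [hPQempty] at this
    exact this
  set m := a * b with hmdef
  have hm1 : 1 ≤ m := Nat.one_le_iff_ne_zero.mpr (by positivity)
  have hadvd : a ∣ m := Dvd.intro b rfl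
  have hbdvd : b ∣ m := Dvd.intro_left a rfl
  -- one-sided step: if the orbit anchor sits on one side, transitivity of `f^[m]`
  -- pushes a connected image of `C` across `w`, so `w ∈ f^[n] '' C` at a good time.
  have side : ∀ (P' Q' : Set D), IsOpen Q' → Q'.Nonempty →
      (∀ S : Set D, IsPreconnected S → (S ∩ P').Nonempty → (S ∩ Q').Nonempty → w ∈ S) →
      ∀ r : ℕ, r < b → f^[r] q ∈ P' → ∃ n : ℕ, n % b = r ∧ w ∈ f^[n] '' C := by
    intro P' Q' hQ'open hQ'ne hbridge r hr hzP
    have hWopen : IsOpen (f^[r] ⁻¹' Q') := hQ'open.preimage (hf.iterate r)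
    have hWne : (f^[r] ⁻¹' Q').Nonempty := by
      obtain ⟨ξ, hξ⟩ := hQ'ne
      obtain ⟨ζ, hζ⟩ := (hsurj.iterate r) ξ
      exact ⟨ζ, by rw [mem_preimage, hζ]; exact hξ⟩
    obtain ⟨t, ht0, ⟨ξ, ⟨x, hxC, hx⟩, hξQ⟩⟩ := htt m hm1 C _ hCopen hWopen hCne hWne
    refine ⟨r + m * t, ?_, ?_⟩
    · obtain ⟨s, hs⟩ := hbdvd
      rw [hs, mul_assoc, Nat.add_mul_mod_self_left]
      exact Nat.mod_eq_of_lt hr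
    · have hiter : (f^[m])^[t] = f^[m * t] := (Function.iterate_mul f m t).symm
      rw [hiter] at hx
      apply hbridge _ (hCpre.image _ (hf.iterate (r + m * t)).continuousOn)
      · refine ⟨f^[r] q, ⟨q, hqC, ?_⟩, hzP⟩
        rw [Function.iterate_add_apply]
        congr 1
        exact iterate_fixed_of_dvd hqa (hadvd.mul_right t)
      · refine ⟨f^[r + m * t] x, ⟨x, hxC, rfl⟩, ?_⟩
        rw [Function.iterate_add_apply, hx]
        exact hξQ
  -- every residue class mod b is realized
  have key : ∀ r : Fin b, ∃ n : ℕ, n % b = (r : ℕ) ∧ w ∈ f^[n] '' C := by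
    rintro ⟨r, hr⟩
    by_cases hzw : f^[r] q = w
    · exact ⟨r, Nat.mod_eq_of_lt hr, ⟨q, hqC, hzw⟩⟩
    · rcases hPQcover _ hzw with hzP | hzQ
      · exact side P Q hQopen hQne bridge r hr hzP
      · exact side Q P hPopen hPne (fun S hS h1 h2 => bridge S hS h2 h1) r hr hzQ
  choose g hg1 hg2 using key
  haveI : Nonempty (Fin b) := ⟨⟨0, by omega⟩⟩
  refine ⟨Finset.univ.sup g, ?_⟩
  intro n hn
  have hb0 : 0 < b := hb1
  set i : Fin b := ⟨n % b, Nat.mod_lt n hb0⟩ with hidef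
  have hle : g i ≤ n := le_trans (Finset.le_sup (Finset.mem_univ i)) hn
  have hmod : n % b = g i % b := by rw [hg1 i]
  have hdvd : b ∣ n - g i := (Nat.modEq_iff_dvd' hle).mp hmod.symm
  obtain ⟨c, hcC, hc⟩ := hg2 i
  refine ⟨w, ⟨c, hCsub hcC, ?_⟩, hwV⟩
  have hsplit : n = (n - g i) + g i := by omega
  rw [hsplit, Function.iterate_add_apply, hc]
  exact iterate_fixed_of_dvd hwb hdvd
end

section
/- Let n ≥ 1, let ε > 0, and let T be an n-star with center a, i.e., a continuum that is the union of n arcs B_1, …, B_n, each having a as one of its endpoints, with B_i ∩ B_j = {a} whenever i ≠ j. Then there exists a mixing continuous map f : T → T such that f(a) = a, f fixes every endpoint of each arc B_i, and sup_{x∈T} d(f(x), x) < ε. -/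
/-!
Rescale every beam to `[0, 5k]` and cut it into the cells `[5p, 5p + 5]`, `p < k`. The map
sends height `t` on a beam to height `zigzag k t`, where `zigzag k` is piecewise linear with
slope `±5` on each unit piece `[m, m + 1]` and maps every piece onto a whole cell. It is negative
only on `[0, 2]`, and negative heights are read on the next beam. So each cell covers itself and
its neighbours on its beam, and the first cell of a beam covers the first cell of the next one:
after `2 (k - 1) + n` steps every cell covers every cell. Stretching by `5` turns the short
segment inside any open set into a segment covering a whole cell, so the map is mixing. Heights
move by at most `6`, which is a small distance once `k` is large. Heights `0` and `5k`, i.e. the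
center and the endpoints, are fixed.
-/

open Set Topology Filter TopologicalSpace

section IterateImage

variable {X : Type*} {f : X → X}

theorem subset_image_iterate_add {A B C : Set X} {p q : ℕ} (hAB : B ⊆ f^[p] '' A)
    (hBC : C ⊆ f^[q] '' B) : C ⊆ f^[q + p] '' A := by
  rw [Function.iterate_add, Set.image_comp]
  exact hBC.trans (image_mono hAB)

theorem subset_image_iterate_of_succ {C : ℕ → Set X} :
    ∀ r, (∀ j < r, C (j + 1) ⊆ f '' C j) → C r ⊆ f^[r] '' C 0
  | 0, _ => by simp
  | r + 1, h => by
    have := subset_image_iterate_add (q := 1)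
      (subset_image_iterate_of_succ r fun j hj => h j (by omega)) (by simpa using h r (by omega))
    rwa [Nat.add_comm 1 r] at this

theorem subset_image_iterate_of_le {A B : Set X} {p q : ℕ} (hA : A ⊆ f '' A)
    (h : B ⊆ f^[p] '' A) (hpq : p ≤ q) : B ⊆ f^[q] '' A := by
  have hA' : A ⊆ f^[q - p] '' A :=
    subset_image_iterate_of_succ (C := fun _ => A) (q - p) fun _ _ => hA
  simpa [Nat.add_sub_cancel' hpq] using subset_image_iterate_add hA' h

end IterateImage

theorem topMixing_of_cells {X ι : Type*} [TopologicalSpace X] {f : X → X} (C : ι → Set X)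
    (hC : ⋃ i, C i = univ) {N : ℕ} (hN : 0 < N) (hcells : ∀ i j, C j ⊆ f^[N] '' C i)
    (hopen : ∀ U : Set X, IsOpen U → U.Nonempty → ∃ m i, C i ⊆ f^[m] '' U) :
    TopMixing f := by
  have hsurj : Function.Surjective f := by
    obtain ⟨N, rfl⟩ : ∃ N', N = N' + 1 := ⟨N - 1, by omega⟩
    refine Function.Surjective.of_comp (g := f^[N]) fun y => ?_
    obtain ⟨j, hj⟩ := mem_iUnion.1 (hC ▸ mem_univ y)
    obtain ⟨x, -, hx⟩ := hcells j j hj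
    exact ⟨x, by rwa [← Function.iterate_succ']⟩
  intro U V hU _ hUne ⟨y, hy⟩
  obtain ⟨m, i, hi⟩ := hopen U hU hUne
  have hall : univ ⊆ f^[N + m] '' U :=
    hC ▸ iUnion_subset fun j => subset_image_iterate_add hi (hcells i j)
  refine ⟨N + m, fun r hr => ⟨y, ?_, hy⟩⟩
  obtain ⟨s, rfl⟩ := Nat.exists_eq_add_of_le hr
  rw [add_comm, Function.iterate_add, Set.image_comp]
  exact image_mono hall (by simp [(hsurj.iterate s).range_eq])

/-- Node values, in units of `5`: on the block `[5q, 5q + 5]` they run through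
`q, q - 1, q, q + 1, q + 2` (`q, q - 1, q, q + 1, q` on the last block `q = k - 1`). -/
def zigzagNode (k m : ℕ) : ℤ :=
  (m / 5 : ℕ) + if m % 5 = 1 then -1 else if m % 5 = 3 then 1
    else if m % 5 = 4 ∧ m / 5 + 1 < k then 2 else 0

section ZigzagNode

variable {k m : ℕ}

theorem zigzagNode_five_mul (k q : ℕ) : zigzagNode k (5 * q) = q := by
  unfold zigzagNode; split_ifs <;> omega

theorem zigzagNode_five_mul_add_one (k q : ℕ) : zigzagNode k (5 * q + 1) = q - 1 := by
  unfold zigzagNode; split_ifs <;> omega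

theorem zigzagNode_five_mul_add_two (k q : ℕ) : zigzagNode k (5 * q + 2) = q := by
  unfold zigzagNode; split_ifs <;> omega

theorem zigzagNode_five_mul_add_three (k q : ℕ) : zigzagNode k (5 * q + 3) = q + 1 := by
  unfold zigzagNode; split_ifs <;> omega

theorem zigzagNode_five_mul_add_four {q : ℕ} (hq : q + 1 < k) :
    zigzagNode k (5 * q + 4) = q + 2 := by
  unfold zigzagNode; split_ifs <;> omega

theorem abs_zigzagNode_succ_sub (k m : ℕ) : |zigzagNode k (m + 1) - zigzagNode k m| = 1 := by
  rw [abs_eq zero_le_one]; unfold zigzagNode; split_ifs <;> omega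

theorem zigzagNode_nonneg (hm : m ≠ 1) : 0 ≤ zigzagNode k m := by
  unfold zigzagNode; split_ifs <;> omega

theorem zigzagNode_nonpos (hm : m ≤ 2) : zigzagNode k m ≤ 0 := by
  unfold zigzagNode; split_ifs <;> omega

theorem neg_one_le_zigzagNode (k m : ℕ) : -1 ≤ zigzagNode k m := by
  unfold zigzagNode; split_ifs <;> omega

theorem zigzagNode_le (hm : m ≤ 5 * k) : zigzagNode k m ≤ k := by
  unfold zigzagNode; split_ifs <;> omega

theorem abs_five_mul_zigzagNode_sub_le (k m : ℕ) : |5 * zigzagNode k m - m| ≤ 6 := by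
  rw [abs_le]; unfold zigzagNode; split_ifs <;> omega

end ZigzagNode

/-- The piecewise linear map of `[0, 5k]` with value `5 * zigzagNode k m` at each node `m`,
written as a sum of ramps so that continuity is immediate. -/
noncomputable def zigzag (k : ℕ) (t : ℝ) : ℝ :=
  ∑ m ∈ Finset.range (5 * k),
    5 * ((zigzagNode k (m + 1) : ℝ) - zigzagNode k m) * max 0 (min 1 (t - m))

section Zigzag

variable {k m : ℕ} {t u v : ℝ}

theorem continuous_zigzag (k : ℕ) : Continuous (zigzag k) := by
  unfold zigzag; fun_prop

theorem zigzag_eq (hm : m < 5 * k) (ht : t ∈ Icc (m : ℝ) (m + 1)) :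
    zigzag k t = 5 * (zigzagNode k m + (zigzagNode k (m + 1) - zigzagNode k m) * (t - m)) := by
  have hramp : ∀ j : ℕ,
      max 0 (min 1 (t - j)) = if j < m then 1 else if j = m then t - m else 0 := by
    intro j
    split_ifs with hj hj'
    · have : (j : ℝ) + 1 ≤ m := by exact_mod_cast hj
      rw [min_eq_left (by linarith [ht.1]), max_eq_right zero_le_one]
    · subst hj'; rw [min_eq_right (by linarith [ht.2]), max_eq_right (by linarith [ht.1])]
    · have : (m : ℝ) + 1 ≤ j := by exact_mod_cast (by omega : m + 1 ≤ j)
      rw [min_eq_right (by linarith [ht.2]), max_eq_left (by linarith [ht.2])]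
  unfold zigzag
  simp_rw [hramp]
  rw [← Finset.sum_range_add_sum_Ico _ (show m + 1 ≤ 5 * k by omega), Finset.sum_range_succ,
    Finset.sum_eq_zero (s := Finset.Ico _ _) fun j hj => by
      have := (Finset.mem_Ico.1 hj).1
      simp [show ¬ j < m by omega, show j ≠ m by omega]]
  rw [Finset.sum_congr rfl fun j hj => by rw [if_pos (Finset.mem_range.1 hj), mul_one],
    ← Finset.mul_sum, Finset.sum_range_sub (fun j => (zigzagNode k j : ℝ))]
  simp [show zigzagNode k 0 = 0 from zigzagNode_five_mul k 0]
  ring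

theorem zigzag_natCast (hm : m ≤ 5 * k) : zigzag k m = 5 * zigzagNode k m := by
  rcases hm.lt_or_eq with hm | rfl
  · rw [zigzag_eq hm ⟨le_rfl, by linarith⟩]; ring
  rcases Nat.eq_zero_or_pos k with rfl | hk
  · simp [zigzag, show zigzagNode 0 0 = 0 from zigzagNode_five_mul 0 0]
  obtain ⟨m, hm⟩ : ∃ m, 5 * k = m + 1 := ⟨5 * k - 1, by omega⟩
  rw [hm, zigzag_eq (m := m) (by omega) ⟨by push_cast; linarith, by push_cast; linarith⟩]
  push_cast; ring

theorem zigzag_mem_uIcc (hm : m < 5 * k) (ht : t ∈ Icc (m : ℝ) (m + 1)) :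
    zigzag k t ∈ uIcc (5 * zigzagNode k m : ℝ) (5 * zigzagNode k (m + 1)) := by
  have h0 : (0 : ℝ) ≤ t - m := by linarith [ht.1]
  have h1 : t - m ≤ 1 := by linarith [ht.2]
  rw [zigzag_eq hm ht, mem_uIcc]
  rcases le_total (zigzagNode k m : ℝ) (zigzagNode k (m + 1)) with h | h
  · left; constructor <;> nlinarith
  · right; constructor <;> nlinarith

theorem abs_zigzag_sub (hm : m < 5 * k) (hu : u ∈ Icc (m : ℝ) (m + 1))
    (hv : v ∈ Icc (m : ℝ) (m + 1)) : |zigzag k v - zigzag k u| = 5 * |v - u| := by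
  have hslope : |(zigzagNode k (m + 1) : ℝ) - zigzagNode k m| = 1 := by
    exact_mod_cast abs_zigzagNode_succ_sub k m
  rw [zigzag_eq hm hu, zigzag_eq hm hv,
    show ∀ a b : ℝ, 5 * (a + b * (v - m)) - 5 * (a + b * (u - m)) = 5 * (b * (v - u)) by
      intros; ring,
    abs_mul, abs_mul, hslope, abs_of_pos (by norm_num : (0 : ℝ) < 5), one_mul]

theorem abs_zigzag_sub_self_le (hm : m < 5 * k) (ht : t ∈ Icc (m : ℝ) (m + 1)) :
    |zigzag k t - t| ≤ 6 := by
  have h0 : (0 : ℝ) ≤ t - m := by linarith [ht.1]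
  have h1 : t - m ≤ 1 := by linarith [ht.2]
  have hm' := abs_le.1 (abs_five_mul_zigzagNode_sub_le k m)
  have hm1 := abs_le.1 (abs_five_mul_zigzagNode_sub_le k (m + 1))
  have a1 : (-6 : ℝ) ≤ 5 * zigzagNode k m - m := by exact_mod_cast hm'.1
  have a2 : 5 * (zigzagNode k m : ℝ) - m ≤ 6 := by exact_mod_cast hm'.2
  have b1 : (-6 : ℝ) ≤ 5 * zigzagNode k (m + 1) - (m + 1) := by exact_mod_cast hm1.1
  have b2 : 5 * (zigzagNode k (m + 1) : ℝ) - (m + 1) ≤ 6 := by exact_mod_cast hm1.2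
  rw [zigzag_eq hm ht, abs_le]
  constructor <;> nlinarith

theorem zigzag_zero (k : ℕ) : zigzag k 0 = 0 := by
  simpa [zigzagNode_five_mul k 0] using zigzag_natCast (k := k) (m := 0) (Nat.zero_le _)

theorem zigzag_nonneg_of_two_le (hm2 : 2 ≤ m) (hm : m < 5 * k)
    (ht : t ∈ Icc (m : ℝ) (m + 1)) : 0 ≤ zigzag k t := by
  have h₁ : (0 : ℝ) ≤ zigzagNode k m := by exact_mod_cast zigzagNode_nonneg (by omega)
  have h₂ : (0 : ℝ) ≤ zigzagNode k (m + 1) := by exact_mod_cast zigzagNode_nonneg (by omega)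
  rcases mem_uIcc.1 (zigzag_mem_uIcc hm ht) with h | h <;> linarith [h.1]

theorem zigzag_nonpos_of_le_one (hm1 : m ≤ 1) (hm : m < 5 * k)
    (ht : t ∈ Icc (m : ℝ) (m + 1)) : zigzag k t ≤ 0 := by
  have h₁ : (zigzagNode k m : ℝ) ≤ 0 := by exact_mod_cast zigzagNode_nonpos (by omega)
  have h₂ : (zigzagNode k (m + 1) : ℝ) ≤ 0 := by exact_mod_cast zigzagNode_nonpos (by omega)
  rcases mem_uIcc.1 (zigzag_mem_uIcc hm ht) with h | h <;> linarith [h.2]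

theorem zigzag_mem_Icc (hm : m < 5 * k) (ht : t ∈ Icc (m : ℝ) (m + 1)) :
    zigzag k t ∈ Icc (-5 : ℝ) (5 * k) := by
  have bound : ∀ j ≤ 5 * k, (5 * zigzagNode k j : ℝ) ∈ Icc (-5 : ℝ) (5 * k) := fun j hj =>
    have h₁ := neg_one_le_zigzagNode k j
    have h₂ := zigzagNode_le (k := k) hj
    ⟨by exact_mod_cast (by omega : -5 ≤ 5 * zigzagNode k j),
      by exact_mod_cast (by omega : 5 * zigzagNode k j ≤ 5 * k)⟩
  exact uIcc_subset_Icc (bound m hm.le) (bound (m + 1) hm) (zigzag_mem_uIcc hm ht)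

end Zigzag

theorem exists_lt_mem_Icc_natCast {L : ℕ} (hL : 0 < L) {t : ℝ} (h0 : 0 ≤ t) (hL' : t ≤ L) :
    ∃ m < L, t ∈ Icc (m : ℝ) (m + 1) := by
  rcases hL'.lt_or_eq with ht | rfl
  · exact ⟨⌊t⌋₊, by exact_mod_cast Nat.floor_lt h0 |>.2 ht, Nat.floor_le h0,
      (Nat.lt_floor_add_one t).le⟩
  · exact ⟨L - 1, by omega, by push_cast [Nat.cast_sub hL]; constructor <;> linarith⟩

theorem uIcc_five_mul_intCast {a b : ℤ} (h : |a - b| = 1) :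
    uIcc (5 * a : ℝ) (5 * b) =
      Icc (5 * ((min a b : ℤ) : ℝ)) (5 * ((min a b : ℤ) : ℝ) + 5) := by
  rcases (abs_eq zero_le_one).1 h with h | h
  · rw [uIcc_of_ge (by exact_mod_cast (by omega : 5 * b ≤ 5 * a)),
      min_eq_right (by omega), show a = b + 1 by omega]
    push_cast; ring_nf
  · rw [uIcc_of_le (by exact_mod_cast (by omega : 5 * a ≤ 5 * b)),
      min_eq_left (by omega), show b = a + 1 by omega]
    push_cast; ring_nf

structure StarChart (T : Type*) [TopologicalSpace T] (n : ℕ) where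
  center : T
  beam : Fin n → Set T
  chart : ∀ i, Icc (0 : ℝ) 1 ≃ₜ beam i
  chart_zero : ∀ i, (chart i ⟨0, by norm_num⟩ : T) = center
  beam_inter : ∀ i j, i ≠ j → beam i ∩ beam j = {center}
  iUnion_beam : ⋃ i, beam i = univ

namespace StarChart

section Topological

variable {T : Type*} [TopologicalSpace T] {n : ℕ} (S : StarChart T n) (k : ℕ)

/-- The point at height `t` on beam `i`, each beam being rescaled to `[0, 5k]`
(heights outside that range are clamped). -/
noncomputable def beamPt (i : Fin n) (t : ℝ) : T :=
  S.chart i (projIcc 0 1 zero_le_one (t / (5 * k)))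

noncomputable def signedPt [NeZero n] (i : Fin n) (s : ℝ) : T :=
  if 0 ≤ s then S.beamPt k i s else S.beamPt k (i + 1) (-s)

theorem exists_mem_beam (x : T) : ∃ i, x ∈ S.beam i :=
  mem_iUnion.1 (S.iUnion_beam ▸ mem_univ x)

noncomputable def index (x : T) : Fin n := (S.exists_mem_beam x).choose

noncomputable def height (x : T) : ℝ :=
  5 * k * (S.chart (S.index x)).symm ⟨x, (S.exists_mem_beam x).choose_spec⟩

noncomputable def zigzagMap [NeZero n] (x : T) : T :=
  S.signedPt k (S.index x) (zigzag k (S.height k x))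

def cell (i : Fin n) (p : ℕ) : Set T := S.beamPt k i '' Icc (5 * p) (5 * p + 5)

variable {S k} {i : Fin n} {t u v : ℝ}

theorem beamPt_mem : S.beamPt k i t ∈ S.beam i := (S.chart i _).2

theorem beamPt_zero : S.beamPt k i 0 = S.center := by
  simp only [beamPt, zero_div, projIcc_left]
  exact S.chart_zero i

theorem beamPt_mul (hk : 0 < k) (s : Icc (0 : ℝ) 1) :
    S.beamPt k i (5 * k * s) = S.chart i s := by
  have : (5 * k * s : ℝ) / (5 * k) = s := by field_simp
  simp [beamPt, this]

theorem continuous_beamPt : Continuous (S.beamPt k i) := by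
  unfold beamPt; fun_prop

theorem beamPt_injOn (hk : 0 < k) : InjOn (S.beamPt k i) (Icc (0 : ℝ) (5 * k)) := by
  intro t ht t' ht' h
  have hk' : (0 : ℝ) < 5 * k := by positivity
  have mem : ∀ {s}, s ∈ Icc (0 : ℝ) (5 * k) → s / (5 * k) ∈ Icc (0 : ℝ) 1 := fun hs =>
    ⟨div_nonneg hs.1 hk'.le, (div_le_one hk').2 hs.2⟩
  have := congrArg Subtype.val ((S.chart i).injective (Subtype.val_injective h))
  simp only [projIcc_of_mem _ (mem ht), projIcc_of_mem _ (mem ht')] at this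
  field_simp at this
  exact this

theorem height_mem (x : T) : S.height k x ∈ Icc (0 : ℝ) (5 * k) := by
  have h := ((S.chart (S.index x)).symm ⟨x, (S.exists_mem_beam x).choose_spec⟩).2
  exact ⟨by unfold height; have := h.1; positivity, by unfold height; nlinarith [h.2]⟩

theorem beamPt_height (hk : 0 < k) (x : T) : S.beamPt k (S.index x) (S.height k x) = x := by
  rw [height, beamPt_mul hk, Homeomorph.apply_symm_apply]

theorem piece_subset_cell {m p : ℕ} (h₁ : 5 * p ≤ m) (h₂ : m + 1 ≤ 5 * p + 5) :
    S.beamPt k i '' Icc (m : ℝ) (m + 1) ⊆ S.cell k i p :=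
  image_mono <| Icc_subset_Icc (by exact_mod_cast h₁) (by exact_mod_cast h₂)

theorem exists_mem_cell (hk : 0 < k) (x : T) :
    ∃ (i : Fin n) (p : ℕ), p < k ∧ x ∈ S.cell k i p := by
  obtain ⟨h₀, h₁⟩ := height_mem (S := S) (k := k) x
  obtain ⟨p, hp, hp₀, hp₁⟩ :=
    exists_lt_mem_Icc_natCast hk (by positivity : 0 ≤ S.height k x / 5) (by linarith)
  exact ⟨S.index x, p, hp, S.height k x, ⟨by linarith, by linarith⟩, beamPt_height hk x⟩

theorem exists_segment_subset_of_isOpen (hk : 0 < k) {U : Set T} (hU : IsOpen U) {x : T}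
    (hx : x ∈ U) :
    ∃ (i : Fin n) (u v : ℝ), 0 ≤ u ∧ u < v ∧ v ≤ 5 * k ∧
      S.beamPt k i '' Icc u v ⊆ U := by
  obtain ⟨h₀, h₁⟩ := height_mem (S := S) (k := k) x
  have htU : S.height k x ∈ S.beamPt k (S.index x) ⁻¹' U := by
    rwa [mem_preimage, beamPt_height hk x]
  obtain ⟨r, hr, hball⟩ := Metric.isOpen_iff.1 (hU.preimage continuous_beamPt) _ htU
  have hk' : (0 : ℝ) < 5 * k := by positivity
  refine ⟨S.index x, max 0 (S.height k x - r / 2), min (5 * k) (S.height k x + r / 2),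
    le_max_left _ _, max_lt (lt_min hk' (by linarith)) (lt_min (by linarith) (by linarith)),
    min_le_left _ _, image_subset_iff.2 fun s hs => hball ?_⟩
  rw [Metric.mem_ball, Real.dist_eq, abs_lt]
  constructor <;> linarith [le_max_right 0 (S.height k x - r / 2), hs.1, hs.2,
    min_le_right (5 * (k : ℝ)) (S.height k x + r / 2)]

theorem isClosed_beam [T2Space T] (i : Fin n) : IsClosed (S.beam i) := by
  have : S.beam i = range (Subtype.val ∘ S.chart i) := by
    rw [(S.chart i).surjective.range_comp, Subtype.range_coe]
  exact this ▸ (isCompact_range (by fun_prop)).isClosed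

variable [NeZero n]

theorem signedPt_of_nonneg {s : ℝ} (hs : 0 ≤ s) : S.signedPt k i s = S.beamPt k i s :=
  if_pos hs

theorem signedPt_of_nonpos {s : ℝ} (hs : s ≤ 0) :
    S.signedPt k i s = S.beamPt k (i + 1) (-s) := by
  rcases hs.lt_or_eq with hs | rfl
  · exact if_neg hs.not_ge
  · simp [signedPt, beamPt_zero]

theorem continuous_signedPt : Continuous (S.signedPt k i) :=
  continuous_if_le continuous_const continuous_id continuous_beamPt.continuousOn
    (continuous_beamPt.comp continuous_neg).continuousOn fun s hs => by
      simp [← hs, beamPt_zero]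

theorem zigzagMap_beamPt (hk : 0 < k) (ht : t ∈ Icc (0 : ℝ) (5 * k)) :
    S.zigzagMap k (S.beamPt k i t) = S.signedPt k i (zigzag k t) := by
  set x := S.beamPt k i t
  have hx := beamPt_height (S := S) hk x
  by_cases hi : S.index x = i
  · rw [hi] at hx
    rw [zigzagMap, hi, beamPt_injOn hk (height_mem x) ht hx]
  · have hxc : x = S.center := by
      have : x ∈ S.beam (S.index x) ∩ S.beam i :=
        ⟨(S.exists_mem_beam x).choose_spec, beamPt_mem⟩
      rwa [S.beam_inter _ _ hi] at this
    have ht0 : t = 0 := beamPt_injOn hk ht ⟨le_rfl, by positivity⟩ (hxc.trans beamPt_zero.symm)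
    have hx0 : S.height k x = 0 := beamPt_injOn hk (height_mem x) ⟨le_rfl, by positivity⟩
      ((hx.trans hxc).trans beamPt_zero.symm)
    rw [zigzagMap, hx0, ht0, zigzag_zero, signedPt_of_nonneg le_rfl, signedPt_of_nonneg le_rfl,
      beamPt_zero, beamPt_zero]

theorem continuous_zigzagMap [T2Space T] (hk : 0 < k) : Continuous (S.zigzagMap k) := by
  refine (locallyFinite_of_finite _).continuous S.iUnion_beam isClosed_beam fun i => ?_
  rw [continuousOn_iff_continuous_domRestrict]
  have : (S.beam i).domRestrict (S.zigzagMap k) =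
      fun y => S.signedPt k i (zigzag k (5 * k * (S.chart i).symm y)) := by
    ext y
    have hy : S.beamPt k i (5 * k * (S.chart i).symm y) = y := by
      rw [beamPt_mul hk, Homeomorph.apply_symm_apply]
    have hmem : (5 * k * (S.chart i).symm y : ℝ) ∈ Icc (0 : ℝ) (5 * k) := by
      have h := ((S.chart i).symm y).2
      exact ⟨by have := h.1; positivity, by nlinarith [h.2]⟩
    rw [domRestrict_apply, ← zigzagMap_beamPt hk hmem, hy]
  rw [this]
  exact continuous_signedPt.comp ((continuous_zigzag k).comp (by fun_prop))

theorem zigzagMap_center (hk : 0 < k) : S.zigzagMap k S.center = S.center := by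
  rw [← beamPt_zero (S := S) (k := k) (i := 0), zigzagMap_beamPt hk ⟨le_rfl, by positivity⟩,
    zigzag_zero, signedPt_of_nonneg le_rfl]

theorem zigzagMap_chart_one (hk : 0 < k) :
    S.zigzagMap k (S.chart i ⟨1, by norm_num⟩) = S.chart i ⟨1, by norm_num⟩ := by
  have h5k := zigzag_natCast (k := k) (le_refl (5 * k))
  rw [zigzagNode_five_mul] at h5k
  push_cast at h5k
  rw [← beamPt_mul hk, mul_one, zigzagMap_beamPt hk ⟨by positivity, le_rfl⟩, h5k,
    signedPt_of_nonneg (by positivity)]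

theorem image_signedPt_of_nonneg {s₁ s₂ : ℝ} (h₁ : 0 ≤ s₁) (h₂ : 0 ≤ s₂) :
    S.signedPt k i '' uIcc s₁ s₂ = S.beamPt k i '' uIcc s₁ s₂ :=
  image_congr fun _ hs => signedPt_of_nonneg ((le_min h₁ h₂).trans hs.1)

theorem image_signedPt_of_nonpos {s₁ s₂ : ℝ} (h₁ : s₁ ≤ 0) (h₂ : s₂ ≤ 0) :
    S.signedPt k i '' uIcc s₁ s₂ = S.beamPt k (i + 1) '' uIcc (-s₁) (-s₂) := by
  rw [← image_neg_uIcc, image_image]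
  exact image_congr fun _ hs => signedPt_of_nonpos (hs.2.trans (max_le h₁ h₂))

theorem image_signedPt_subset_image_zigzagMap (hk : 0 < k) (hu : 0 ≤ u) (huv : u ≤ v)
    (hv : v ≤ 5 * k) :
    S.signedPt k i '' uIcc (zigzag k u) (zigzag k v) ⊆
      S.zigzagMap k '' (S.beamPt k i '' Icc u v) := by
  calc S.signedPt k i '' uIcc (zigzag k u) (zigzag k v)
      ⊆ S.signedPt k i '' (zigzag k '' Icc u v) := image_mono <| by
        simpa only [uIcc_of_le huv] using
          intermediate_value_uIcc (a := u) (b := v) (continuous_zigzag k).continuousOn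
    _ = S.zigzagMap k '' (S.beamPt k i '' Icc u v) := by
        rw [image_image, image_image]
        exact image_congr fun t ht => (zigzagMap_beamPt hk ⟨hu.trans ht.1, ht.2.trans hv⟩).symm

section Piece

variable {m : ℕ} (hk : 0 < k) (hm : m < 5 * k) (hu : (m : ℝ) ≤ u) (huv : u ≤ v)
  (hv : v ≤ m + 1)
include hk hm hu huv hv

theorem image_piece_of_two_le (hm2 : 2 ≤ m) :
    S.beamPt k i '' uIcc (zigzag k u) (zigzag k v) ⊆
      S.zigzagMap k '' (S.beamPt k i '' Icc u v) := by
  rw [← image_signedPt_of_nonneg (zigzag_nonneg_of_two_le hm2 hm ⟨hu, huv.trans hv⟩)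
    (zigzag_nonneg_of_two_le hm2 hm ⟨hu.trans huv, hv⟩)]
  exact image_signedPt_subset_image_zigzagMap hk ((Nat.cast_nonneg m).trans hu) huv
    (hv.trans (by exact_mod_cast hm))

theorem image_piece_of_le_one (hm1 : m ≤ 1) :
    S.beamPt k (i + 1) '' uIcc (-zigzag k u) (-zigzag k v) ⊆
      S.zigzagMap k '' (S.beamPt k i '' Icc u v) := by
  rw [← image_signedPt_of_nonpos (zigzag_nonpos_of_le_one hm1 hm ⟨hu, huv.trans hv⟩)
    (zigzag_nonpos_of_le_one hm1 hm ⟨hu.trans huv, hv⟩)]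
  exact image_signedPt_subset_image_zigzagMap hk ((Nat.cast_nonneg m).trans hu) huv
    (hv.trans (by exact_mod_cast hm))

theorem exists_image_piece :
    ∃ (i' : Fin n) (u' v' : ℝ), 0 ≤ u' ∧ v' ≤ 5 * k ∧ v' - u' = 5 * (v - u) ∧
      S.beamPt k i' '' Icc u' v' ⊆ S.zigzagMap k '' (S.beamPt k i '' Icc u v) := by
  have hu' : u ∈ Icc (m : ℝ) (m + 1) := ⟨hu, huv.trans hv⟩
  have hv' : v ∈ Icc (m : ℝ) (m + 1) := ⟨hu.trans huv, hv⟩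
  have hlen : |zigzag k v - zigzag k u| = 5 * (v - u) := by
    rw [abs_zigzag_sub hm hu' hv', abs_of_nonneg (sub_nonneg.2 huv)]
  have hbu := zigzag_mem_Icc hm hu'
  have hbv := zigzag_mem_Icc hm hv'
  have hk5 : (5 : ℝ) ≤ 5 * k := by exact_mod_cast (by omega : 5 ≤ 5 * k)
  rcases le_or_gt 2 m with hm2 | hm1
  · have h₁ := zigzag_nonneg_of_two_le hm2 hm hu'
    have h₂ := zigzag_nonneg_of_two_le hm2 hm hv'
    refine ⟨i, min (zigzag k u) (zigzag k v), max (zigzag k u) (zigzag k v), le_min h₁ h₂,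
      max_le hbu.2 hbv.2, ?_, image_piece_of_two_le hk hm hu huv hv hm2⟩
    rw [max_sub_min_eq_abs, hlen]
  · have h₁ := zigzag_nonpos_of_le_one (by omega) hm hu'
    have h₂ := zigzag_nonpos_of_le_one (by omega) hm hv'
    refine ⟨i + 1, min (-zigzag k u) (-zigzag k v), max (-zigzag k u) (-zigzag k v),
      le_min (by linarith) (by linarith), max_le (by linarith [hbu.1]) (by linarith [hbv.1]), ?_,
      image_piece_of_le_one hk hm hu huv hv (by omega)⟩
    rw [max_sub_min_eq_abs, ← hlen, ← abs_neg]
    ring_nf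

end Piece

theorem cell_subset_image_piece {m p : ℕ} (hk : 0 < k) (hm2 : 2 ≤ m) (hm : m < 5 * k)
    (hp : min (zigzagNode k m) (zigzagNode k (m + 1)) = p) :
    S.cell k i p ⊆ S.zigzagMap k '' (S.beamPt k i '' Icc m (m + 1)) := by
  have h := image_piece_of_two_le (S := S) (i := i) hk hm le_rfl (by linarith) le_rfl hm2
  have hm1 := zigzag_natCast (k := k) (m := m + 1) hm
  push_cast at hm1
  rwa [zigzag_natCast hm.le, hm1,
    uIcc_five_mul_intCast ((abs_sub_comm _ _).trans (abs_zigzagNode_succ_sub k m)), hp] at h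

theorem cell_zero_subset_image_piece {m : ℕ} (hk : 0 < k) (hm1 : m ≤ 1) :
    S.cell k (i + 1) 0 ⊆ S.zigzagMap k '' (S.beamPt k i '' Icc m (m + 1)) := by
  have h := image_piece_of_le_one (S := S) (i := i) hk (by omega) le_rfl (by linarith) le_rfl hm1
  have hm1' := zigzag_natCast (k := k) (m := m + 1) (by omega)
  push_cast at hm1'
  rw [zigzag_natCast (by omega), hm1'] at h
  convert h using 2
  interval_cases m
  · simp [show zigzagNode k 0 = 0 from zigzagNode_five_mul k 0,
      show zigzagNode k 1 = -1 from zigzagNode_five_mul_add_one k 0, cell, uIcc_of_le]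
  · simp [show zigzagNode k 2 = 0 from zigzagNode_five_mul_add_two k 0,
      show zigzagNode k 1 = -1 from zigzagNode_five_mul_add_one k 0, cell, uIcc_of_ge]

variable (hk : 0 < k)
include hk

theorem cell_subset_image_cell {p : ℕ} (hp : p < k) :
    S.cell k i p ⊆ S.zigzagMap k '' S.cell k i p := by
  refine (cell_subset_image_piece (m := 5 * p + 2) hk (by omega) (by omega) ?_).trans
    (image_mono (piece_subset_cell (by omega) (by omega)))
  rw [zigzagNode_five_mul_add_two, show 5 * p + 2 + 1 = 5 * p + 3 by rfl,
    zigzagNode_five_mul_add_three]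
  omega

theorem cell_subset_image_cell_succ {p : ℕ} (hp : p + 1 < k) :
    S.cell k i p ⊆ S.zigzagMap k '' S.cell k i (p + 1) := by
  refine (cell_subset_image_piece (m := 5 * (p + 1)) hk (by omega) (by omega) ?_).trans
    (image_mono (piece_subset_cell (by omega) (by omega)))
  rw [zigzagNode_five_mul, zigzagNode_five_mul_add_one]
  omega

theorem cell_succ_subset_image_cell {p : ℕ} (hp : p + 1 < k) :
    S.cell k i (p + 1) ⊆ S.zigzagMap k '' S.cell k i p := by
  refine (cell_subset_image_piece (m := 5 * p + 3) hk (by omega) (by omega) ?_).trans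
    (image_mono (piece_subset_cell (by omega) (by omega)))
  rw [zigzagNode_five_mul_add_three, show 5 * p + 3 + 1 = 5 * p + 4 by rfl,
    zigzagNode_five_mul_add_four hp]
  omega

theorem cell_zero_succ_subset_image_cell_zero :
    S.cell k (i + 1) 0 ⊆ S.zigzagMap k '' S.cell k i 0 :=
  (cell_zero_subset_image_piece (m := 0) hk zero_le_one).trans
    (image_mono (piece_subset_cell (by omega) (by omega)))

theorem cell_zero_subset_image_iterate {p : ℕ} (hp : p < k) :
    S.cell k i 0 ⊆ (S.zigzagMap k)^[k - 1] '' S.cell k i p := by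
  refine subset_image_iterate_of_le (cell_subset_image_cell hk hp) ?_ (by omega : p ≤ k - 1)
  simpa using subset_image_iterate_of_succ (C := fun j => S.cell k i (p - j)) p fun j hj => by
    simpa [show p - j = p - (j + 1) + 1 by omega] using
      cell_subset_image_cell_succ (i := i) (p := p - (j + 1)) hk (by omega)

theorem cell_subset_image_iterate_cell_zero {p : ℕ} (hp : p < k) :
    S.cell k i p ⊆ (S.zigzagMap k)^[k - 1] '' S.cell k i 0 :=
  subset_image_iterate_of_le (cell_subset_image_cell hk hk)
    (subset_image_iterate_of_succ (C := fun j => S.cell k i j) p fun _ hj =>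
      cell_succ_subset_image_cell hk (by omega)) (by omega)

open Fin.NatCast in
theorem cell_zero_subset_image_iterate_cell_zero (i' : Fin n) :
    S.cell k i' 0 ⊆ (S.zigzagMap k)^[n] '' S.cell k i 0 := by
  have h := subset_image_iterate_of_succ (f := S.zigzagMap k)
    (C := fun j : ℕ => S.cell k (i + (j : Fin n)) 0) (i' - i).val fun j _ => by
      simpa [add_assoc] using cell_zero_succ_subset_image_cell_zero (i := i + (j : Fin n)) hk
  simp only [Fin.cast_val_eq_self, add_sub_cancel, Nat.cast_zero, add_zero] at h
  exact subset_image_iterate_of_le (cell_subset_image_cell hk hk) h (i' - i).isLt.le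

theorem cell_subset_image_iterate {i' : Fin n} {p p' : ℕ} (hp : p < k) (hp' : p' < k) :
    S.cell k i' p' ⊆ (S.zigzagMap k)^[(k - 1) + (n + (k - 1))] '' S.cell k i p :=
  subset_image_iterate_add
    (subset_image_iterate_add (cell_zero_subset_image_iterate hk hp)
      (cell_zero_subset_image_iterate_cell_zero hk i'))
    (cell_subset_image_iterate_cell_zero hk hp')

theorem exists_cell_subset_image_piece {m : ℕ} (hm : m < 5 * k) :
    ∃ (i' : Fin n) (p : ℕ), p < k ∧
      S.cell k i' p ⊆ S.zigzagMap k '' (S.beamPt k i '' Icc (m : ℝ) (m + 1)) := by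
  rcases lt_or_ge m 2 with hm1 | hm2
  · exact ⟨i + 1, 0, hk, cell_zero_subset_image_piece hk (by omega)⟩
  have h₁ := zigzagNode_nonneg (k := k) (m := m) (by omega)
  have h₂ := zigzagNode_nonneg (k := k) (m := m + 1) (by omega)
  have h₃ := zigzagNode_le (k := k) (m := m + 1) (by omega)
  have h₄ := zigzagNode_le (k := k) (m := m) (by omega)
  have h₅ := (abs_eq zero_le_one).1 (abs_zigzagNode_succ_sub k m)
  exact ⟨i, (min (zigzagNode k m) (zigzagNode k (m + 1))).toNat, by omega,
    cell_subset_image_piece hk hm2 hm (by omega)⟩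

theorem exists_cell_subset_image (hu : 0 ≤ u) (huv : u + 2 ≤ v) (hv : v ≤ 5 * k) :
    ∃ (i' : Fin n) (p : ℕ), p < k ∧
      S.cell k i' p ⊆ S.zigzagMap k '' (S.beamPt k i '' Icc u v) := by
  have h₁ : u ≤ ⌈u⌉₊ := Nat.le_ceil u
  have h₂ : (⌈u⌉₊ : ℝ) < u + 1 := Nat.ceil_lt_add_one hu
  obtain ⟨i', p, hp, h⟩ := exists_cell_subset_image_piece (S := S) (i := i) hk
    (m := ⌈u⌉₊) (by exact_mod_cast (by linarith : (⌈u⌉₊ : ℝ) < 5 * k))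
  exact ⟨i', p, hp, h.trans (image_mono (image_mono (Icc_subset_Icc h₁ (by linarith))))⟩

/-- A short segment has a sub-segment of at least half its length inside one piece
`[m, m + 1]`; the map stretches that by `5 > 2 · 2`. -/
theorem exists_image_segment_expand (hu : 0 ≤ u) (huv : u < v) (hv : v ≤ 5 * k)
    (hlen : v - u < 2) :
    ∃ (i' : Fin n) (u' v' : ℝ), 0 ≤ u' ∧ v' ≤ 5 * k ∧ 2 * (v - u) ≤ v' - u' ∧
      S.beamPt k i' '' Icc u' v' ⊆ S.zigzagMap k '' (S.beamPt k i '' Icc u v) := by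
  set m := ⌊(u + v) / 2⌋₊
  have h₁ : (m : ℝ) ≤ (u + v) / 2 := Nat.floor_le (by linarith)
  have h₂ : (u + v) / 2 < m + 1 := Nat.lt_floor_add_one _
  have hhalf : v - u ≤ 2 * (min v (m + 1) - max u m) := by
    rcases max_cases u (m : ℝ) with ⟨h, -⟩ | ⟨h, -⟩ <;>
      rcases min_cases v ((m : ℝ) + 1) with ⟨h', -⟩ | ⟨h', -⟩ <;> rw [h, h'] <;> linarith
  obtain ⟨i', u', v', hu', hv', hlen', hsub⟩ := exists_image_piece (S := S) (i := i)
    (u := max u m) (v := min v (m + 1)) hk (m := m)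
    (by exact_mod_cast (by linarith : (m : ℝ) < 5 * k)) (le_max_right _ _) (by linarith)
    (min_le_right _ _)
  exact ⟨i', u', v', hu', hv', by linarith,
    hsub.trans (image_mono (image_mono (Icc_subset_Icc (le_max_left _ _) (min_le_left _ _))))⟩

theorem exists_cell_subset_image_iterate (hu : 0 ≤ u) (huv : u < v) (hv : v ≤ 5 * k) :
    ∃ (N : ℕ) (i' : Fin n) (p : ℕ), p < k ∧
      S.cell k i' p ⊆ (S.zigzagMap k)^[N] '' (S.beamPt k i '' Icc u v) := by
  obtain ⟨j, hj⟩ := pow_unbounded_of_one_lt (2 / (v - u)) one_lt_two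
  replace hj : 2 ≤ 2 ^ j * (v - u) := ((div_lt_iff₀ (by linarith)).1 hj).le
  induction j generalizing i u v with
  | zero =>
    obtain ⟨i', p, hp, h⟩ := exists_cell_subset_image (S := S) (i := i) hk hu (by linarith) hv
    exact ⟨1, i', p, hp, by simpa using h⟩
  | succ j ih =>
    have hpow : (1 : ℝ) ≤ 2 ^ j := one_le_pow₀ one_le_two
    by_cases hlen : 2 ≤ v - u
    · exact ih hu huv hv (by nlinarith)
    obtain ⟨i', u', v', hu', hv', hlen', hsub⟩ :=
      exists_image_segment_expand (S := S) (i := i) hk hu huv hv (by linarith)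
    obtain ⟨N, i'', p, hp, h⟩ := ih hu' (by linarith) hv' (by rw [pow_succ] at hj; nlinarith)
    exact ⟨N + 1, i'', p, hp, subset_image_iterate_add (by simpa using hsub) h⟩

theorem topMixing_zigzagMap : TopMixing (S.zigzagMap k) := by
  refine topMixing_of_cells (fun ip : Fin n × Fin k => S.cell k ip.1 ip.2) ?_
    (N := (k - 1) + (n + (k - 1))) (by have := Nat.pos_of_neZero n; omega)
    (fun a b => cell_subset_image_iterate hk a.2.isLt b.2.isLt) fun U hU ⟨x, hx⟩ => ?_
  · refine eq_univ_of_forall fun x => ?_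
    obtain ⟨i, p, hp, hx⟩ := exists_mem_cell (S := S) hk x
    exact mem_iUnion.2 ⟨(i, ⟨p, hp⟩), hx⟩
  · obtain ⟨i, u, v, hu, huv, hv, hU'⟩ := exists_segment_subset_of_isOpen (S := S) hk hU hx
    obtain ⟨N, i', p, hp, h⟩ := exists_cell_subset_image_iterate (S := S) (i := i) hk hu huv hv
    exact ⟨N, (i', ⟨p, hp⟩), h.trans (image_mono hU')⟩

end Topological

section Metric

variable {T : Type*} [PseudoMetricSpace T] {n : ℕ} (S : StarChart T n)

theorem exists_dist_beamPt_lt {ε : ℝ} (hε : 0 < ε) :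
    ∃ k : ℕ, 0 < k ∧
      ∀ i t t', |t - t'| ≤ 6 → dist (S.beamPt k i t) (S.beamPt k i t') < ε := by
  have huc : UniformContinuous fun (s : ℝ) (i : Fin n) =>
      (S.chart i (projIcc 0 1 zero_le_one s) : T) :=
    uniformContinuous_pi.2 fun i => (CompactSpace.uniformContinuous_of_continuous
      (by fun_prop : Continuous fun s : Icc (0 : ℝ) 1 => (S.chart i s : T))).comp
        (LipschitzWith.projIcc zero_le_one).uniformContinuous
  obtain ⟨δ, hδ, hdist⟩ := Metric.uniformContinuous_iff.1 huc ε hε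
  obtain ⟨k, hk⟩ := exists_nat_gt (6 / (5 * δ))
  have hk0 : (0 : ℝ) < k := lt_trans (by positivity) hk
  refine ⟨k, by exact_mod_cast hk0, fun i t t' h => (dist_le_pi_dist _ _ i).trans_lt (hdist ?_)⟩
  rw [div_lt_iff₀ (by positivity)] at hk
  rw [Real.dist_eq, ← sub_div, abs_div, abs_of_pos (by positivity : (0 : ℝ) < 5 * k),
    div_lt_iff₀ (by positivity)]
  linarith

variable {S} {k : ℕ} [NeZero n] {ε : ℝ}

/-- Where `zigzag k t ≥ 0` the height moves by at most `6` along the beam; otherwise `t ≤ 2`,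
and the point moves through the center to height at most `5` on the next beam. -/
theorem dist_zigzagMap_lt (hk : 0 < k)
    (hδ : ∀ i t t', |t - t'| ≤ 6 → dist (S.beamPt k i t) (S.beamPt k i t') < ε / 2)
    (x : T) : dist (S.zigzagMap k x) x < ε := by
  obtain ⟨h₀, h₁⟩ := height_mem (S := S) (k := k) x
  obtain ⟨m, hm, htm⟩ :=
    exists_lt_mem_Icc_natCast (L := 5 * k) (by omega) h₀ (by exact_mod_cast h₁)
  have hx := beamPt_height (S := S) hk x
  set i := S.index x
  set t := S.height k x
  have hF : S.zigzagMap k x = S.signedPt k i (zigzag k t) := by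
    rw [← zigzagMap_beamPt hk ⟨h₀, h₁⟩, hx]
  have hε : 0 < ε := by linarith [dist_nonneg.trans_lt (hδ i t t (by simp))]
  rw [hF, ← hx]
  rcases le_or_gt 0 (zigzag k t) with hg | hg
  · rw [signedPt_of_nonneg hg]
    exact (hδ _ _ _ (abs_zigzag_sub_self_le hm htm)).trans (half_lt_self hε)
  have hm1 : m ≤ 1 := by
    by_contra! hm2
    exact hg.not_ge (zigzag_nonneg_of_two_le hm2 hm htm)
  have ht2 : t ≤ 2 := by linarith [htm.2, (show (m : ℝ) ≤ 1 by exact_mod_cast hm1)]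
  have hg5 := (zigzag_mem_Icc hm htm).1
  rw [signedPt_of_nonpos hg.le]
  calc dist (S.beamPt k (i + 1) (-zigzag k t)) (S.beamPt k i t)
      ≤ dist (S.beamPt k (i + 1) (-zigzag k t)) (S.beamPt k (i + 1) 0) +
          dist (S.beamPt k i 0) (S.beamPt k i t) := by
        rw [beamPt_zero, beamPt_zero]; exact dist_triangle _ _ _
    _ < ε / 2 + ε / 2 := add_lt_add
        (hδ _ _ _ (by rw [sub_zero, abs_of_nonneg (by linarith)]; linarith))
        (hδ _ _ _ (by rw [zero_sub, abs_neg, abs_of_nonneg h₀]; linarith))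
    _ = ε := add_halves ε

end Metric

end StarChart

theorem stmt12_general {T : Type*} [MetricSpace T]
    {n : ℕ} (hn : 1 ≤ n) {ε : ℝ} (hε : 0 < ε) (a : T) (B : Fin n → Set T)
    (e : Fin n → T) (harc : ∀ i, IsArcEnds (B i) a (e i))
    (hmeet : ∀ i j, i ≠ j → B i ∩ B j = {a})
    (hcover : (⋃ i, B i) = Set.univ) :
    ∃ f : T → T, Continuous f ∧ TopMixing f ∧ f a = a ∧ (∀ i, f (e i) = e i) ∧
      ∀ x : T, dist (f x) x < ε := by
  have : NeZero n := ⟨by omega⟩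
  choose E hE0 hE1 using harc
  let S : StarChart T n := ⟨a, B, E, hE0, hmeet, hcover⟩
  obtain ⟨k, hk, hδ⟩ := S.exists_dist_beamPt_lt (half_pos hε)
  refine ⟨S.zigzagMap k, StarChart.continuous_zigzagMap hk, StarChart.topMixing_zigzagMap hk,
    StarChart.zigzagMap_center hk, fun i => ?_, StarChart.dist_zigzagMap_lt hk hδ⟩
  rw [← hE1 i]
  exact StarChart.zigzagMap_chart_one hk

/-- On any n-star there is a mixing map, arbitrarily close to the
identity, fixing the center and all the endpoints of the beams. -/
theorem stmt12 {T : Type*} [MetricSpace T] [CompactSpace T] [ConnectedSpace T]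
    {n : ℕ} (hn : 1 ≤ n) {ε : ℝ} (hε : 0 < ε) (a : T) (B : Fin n → Set T)
    (e : Fin n → T) (harc : ∀ i, IsArcEnds (B i) a (e i))
    (hmeet : ∀ i j, i ≠ j → B i ∩ B j = {a})
    (hcover : (⋃ i, B i) = Set.univ) :
    ∃ f : T → T, Continuous f ∧ TopMixing f ∧ f a = a ∧ (∀ i, f (e i) = e i) ∧
      ∀ x : T, dist (f x) x < ε :=
  stmt12_general hn hε a B e harc hmeet hcover
end

section
/- Let X be a continuum and f : X → X a continuous map such that the set Per(2^f) of periodic points of the induced map 2^f is dense in the hyperspace 2^X. Let A be a free arc in X with endpoints a and b, a ≠ b. Then Per(f) ∩ (A \ {a,b}) ≠ ∅. -/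
open Set Topology Filter TopologicalSpace

/-
Density of periodic points of `2^f` puts, inside any two disjoint windows of the open arc, compact
sets `K₁`, `K₂` with `f^[mᵢ] '' Kᵢ = Kᵢ`. Read `g = f^[m]` in the arc coordinate along the hull
`[u, v]` of such a `K`: the ends of the hull are pushed inwards, so either `g` stays in the arc on
`[u, v]` and has a fixed point there, or it first leaves the open arc through an endpoint. Leaving
through the near endpoint again forces a fixed point; leaving through the far one means that an
interval of the window is stretched across the whole arc beyond it. With `K₁` left of `K₂`, the
first window thus covers an interval of the second and vice versa, and a fixed point of the
composite `f^[m₂] ∘ f^[m₁]` follows from the intermediate value theorem.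
-/

open Function

theorem coe_hyperMap_iterate {X : Type*} [TopologicalSpace X] {f : X → X} (hf : Continuous f)
    (n : ℕ) (K : NonemptyCompacts X) : ((hyperMap hf)^[n] K : Set X) = f^[n] '' K := by
  induction n with
  | zero => simp
  | succ n ih =>
    rw [iterate_succ_apply', iterate_succ', image_comp, ← ih]
    rfl

theorem exists_periodic_nonemptyCompacts_subset {X : Type*} [TopologicalSpace X] {f : X → X}
    (hf : Continuous f) (hper : Dense {K : NonemptyCompacts X | IsPeriodic (hyperMap hf) K})
    {O : Set X} (hO : IsOpen O) (hne : O.Nonempty) :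
    ∃ (K : NonemptyCompacts X) (m : ℕ), 1 ≤ m ∧ f^[m] '' K = K ∧ (K : Set X) ⊆ O := by
  obtain ⟨x, hx⟩ := hne
  obtain ⟨K, ⟨m, hm, hK⟩, hKO⟩ :=
    hper.exists_mem_open (NonemptyCompacts.isOpen_subsets_of_isOpen hO) ⟨{x}, by simpa⟩
  exact ⟨K, m, hm, by rw [← coe_hyperMap_iterate hf, hK], hKO⟩

theorem exists_first_exit {X : Type*} [TopologicalSpace X] {F : ℝ → X} {u v : ℝ}
    (hF : ContinuousOn F (Icc u v)) {U : Set X} (hU : IsOpen U) (hu : F u ∈ U) :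
    (∀ s ∈ Icc u v, F s ∈ U) ∨
      ∃ w ∈ Ioc u v, (∀ s ∈ Ico u w, F s ∈ U) ∧ F w ∈ closure U \ U := by
  by_cases hstay : ∀ s ∈ Icc u v, F s ∈ U
  · exact Or.inl hstay
  push Not at hstay
  set S := Icc u v ∩ F ⁻¹' Uᶜ
  have hS : IsCompact S :=
    isCompact_Icc.of_isClosed_subset
      (hF.preimage_isClosed_of_isClosed isClosed_Icc hU.isClosed_compl) inter_subset_left
  set w := sInf S
  have hw : w ∈ S := hS.sInf_mem hstay
  have huw : u < w := lt_of_le_of_ne hw.1.1 fun huw => hw.2 (huw ▸ hu)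
  have hbefore : ∀ s ∈ Ico u w, F s ∈ U := fun s hs => by
    by_contra hsU
    exact hs.2.not_ge (csInf_le hS.bddBelow ⟨⟨hs.1, hs.2.le.trans hw.1.2⟩, hsU⟩)
  refine Or.inr ⟨w, ⟨huw, hw.1.2⟩, hbefore, ?_, hw.2⟩
  have hw_cl : w ∈ closure (Ico u w) := by rw [closure_Ico huw.ne]; exact right_mem_Icc.2 huw.le
  exact closure_mono (image_subset_iff.2 hbefore)
    (((hF w hw.1).mono (Ico_subset_Icc_self.trans (Icc_subset_Icc_right hw.1.2))).mem_closure_image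
      hw_cl)

theorem exists_comp_eq_self_of_covers {Φ₁ Φ₂ : ℝ → ℝ} {p₁ q₁ p₂ q₂ : ℝ} (h₁ : p₁ ≤ q₁)
    (h₂ : p₂ ≤ q₂) (hΦ₁ : ContinuousOn Φ₁ (Icc p₁ q₁)) (hΦ₂ : ContinuousOn Φ₂ (Icc p₂ q₂))
    (hp₁ : Φ₁ p₁ < p₂) (hq₁ : q₂ < Φ₁ q₁) (hp₂ : Φ₂ p₂ < p₁) (hq₂ : q₁ < Φ₂ q₂) :
    ∃ s ∈ Icc p₁ q₁, Φ₁ s ∈ Icc p₂ q₂ ∧ Φ₂ (Φ₁ s) = s := by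
  -- Clamping `Φ₁` into `[p₂, q₂]` makes the composite defined; the strict inequalities keep its
  -- fixed points away from the clamped region.
  set π : ℝ → ℝ := fun x => projIcc p₂ q₂ h₂ x
  have hπ : ContinuousOn (fun s => Φ₂ (π (Φ₁ s)) - s) (Icc p₁ q₁) :=
    ((hΦ₂.comp_continuous (continuous_subtype_val.comp continuous_projIcc)
      fun x => (projIcc p₂ q₂ h₂ x).2).comp_continuousOn hΦ₁).sub continuousOn_id
  have hπ_low : ∀ x, x ≤ p₂ → π x = p₂ := fun x hx => by simp [π, projIcc_of_le_left h₂ hx]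
  have hπ_high : ∀ x, q₂ ≤ x → π x = q₂ := fun x hx => by simp [π, projIcc_of_right_le h₂ hx]
  obtain ⟨s, hs, hfix⟩ := intermediate_value_Icc h₁ hπ (show (0 : ℝ) ∈ Icc _ _ from
    ⟨by simp only [hπ_low _ hp₁.le]; linarith, by simp only [hπ_high _ hq₁.le]; linarith⟩)
  have hmem : Φ₁ s ∈ Icc p₂ q₂ := by
    refine ⟨le_of_not_gt fun hlt => ?_, le_of_not_gt fun hlt => ?_⟩
    · simp only [hπ_low _ hlt.le] at hfix; linarith [hs.1]
    · simp only [hπ_high _ hlt.le] at hfix; linarith [hs.2]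
  refine ⟨s, hs, hmem, ?_⟩
  simpa [π, projIcc_of_mem h₂ hmem, sub_eq_zero] using hfix

theorem image_comp_one_sub_Ioo {X : Type*} (E : ℝ → X) :
    (fun t => E (1 - t)) '' Ioo 0 1 = E '' Ioo 0 1 := by
  rw [show (fun t => E (1 - t)) = E ∘ (fun t => 1 - t) from rfl, image_comp]
  simp

/-- `E` parametrizes the arc `A` by `[0, 1]` with inverse `φ`; outside `[0, 1]` and `A` their
values are irrelevant. -/
structure IsArcChart {X : Type*} [TopologicalSpace X] (A : Set X) (E : ℝ → X) (φ : X → ℝ) :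
    Prop where
  continuous_param : Continuous E
  continuousOn_coord : ContinuousOn φ A
  param_mem : ∀ t ∈ Icc (0 : ℝ) 1, E t ∈ A
  coord_mem : ∀ x ∈ A, φ x ∈ Icc (0 : ℝ) 1
  coord_param : ∀ t ∈ Icc (0 : ℝ) 1, φ (E t) = t
  param_coord : ∀ x ∈ A, E (φ x) = x

structure IsFreeArcChart {X : Type*} [TopologicalSpace X] (A : Set X) (E : ℝ → X) (φ : X → ℝ) :
    Prop extends IsArcChart A E φ where
  isOpen_image_Ioo : IsOpen (E '' Ioo 0 1)

namespace IsArcChart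

variable {X : Type*} [TopologicalSpace X] {A : Set X} {E : ℝ → X} {φ : X → ℝ}

theorem image_Icc (h : IsArcChart A E φ) : E '' Icc 0 1 = A :=
  Subset.antisymm (image_subset_iff.2 h.param_mem)
    fun x hx => ⟨φ x, h.coord_mem x hx, h.param_coord x hx⟩

theorem image_Ioo (h : IsArcChart A E φ) : E '' Ioo 0 1 = A \ {E 0, E 1} := by
  have hinj : InjOn E (Icc 0 1) := LeftInvOn.injOn h.coord_param
  rw [← Icc_sdiff_both, hinj.image_sdiff_subset (pair_subset (left_mem_Icc.2 zero_le_one)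
    (right_mem_Icc.2 zero_le_one)), image_Icc h, image_pair]

theorem isClosed [T2Space X] (h : IsArcChart A E φ) : IsClosed A :=
  h.image_Icc ▸ (isCompact_Icc.image h.continuous_param).isClosed

theorem image_Ioo_subset (h : IsArcChart A E φ) : E '' Ioo 0 1 ⊆ A :=
  h.image_Icc ▸ image_mono Ioo_subset_Icc_self

theorem mem_image_Ioo (h : IsArcChart A E φ) {x : X} (hx : x ∈ A) (hφx : φ x ∈ Ioo 0 1) :
    x ∈ E '' Ioo 0 1 :=
  ⟨φ x, hφx, h.param_coord x hx⟩

theorem coord_eq_zero_or_one (h : IsArcChart A E φ) {x : X} (hx : x ∈ A)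
    (hxU : x ∉ E '' Ioo 0 1) : φ x = 0 ∨ φ x = 1 := by
  obtain ⟨h0, h1⟩ := h.coord_mem x hx
  by_contra! hne
  exact hxU (h.mem_image_Ioo hx ⟨h0.lt_of_ne' hne.1, h1.lt_of_ne hne.2⟩)

theorem reflect (h : IsArcChart A E φ) :
    IsArcChart A (fun t => E (1 - t)) (fun x => 1 - φ x) where
  continuous_param := h.continuous_param.comp (continuous_const.sub continuous_id)
  continuousOn_coord := continuousOn_const.sub h.continuousOn_coord
  param_mem t ht := h.param_mem _ ⟨by linarith [ht.2], by linarith [ht.1]⟩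
  coord_mem x hx := ⟨by linarith [(h.coord_mem x hx).2], by linarith [(h.coord_mem x hx).1]⟩
  coord_param t ht := by
    rw [h.coord_param _ ⟨by linarith [ht.2], by linarith [ht.1]⟩]
    ring
  param_coord x hx := by simp only [sub_sub_cancel, h.param_coord x hx]

theorem param_mem_window (h : IsArcChart A E φ) {t c d : ℝ} (ht : t ∈ Ioo 0 1)
    (htcd : t ∈ Ioo c d) : E t ∈ E '' Ioo 0 1 ∩ φ ⁻¹' Ioo c d :=
  ⟨mem_image_of_mem E ht, by rwa [mem_preimage, h.coord_param t (Ioo_subset_Icc_self ht)]⟩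

theorem continuousOn_coord_comp (h : IsArcChart A E φ) {g : X → X} (hg : Continuous g)
    {S : Set ℝ} (hS : ∀ s ∈ S, g (E s) ∈ A) : ContinuousOn (fun s => φ (g (E s))) S :=
  h.continuousOn_coord.comp (hg.comp h.continuous_param).continuousOn hS

theorem exists_isFixedPt_of_le_of_le (h : IsArcChart A E φ) {g : X → X} (hg : Continuous g)
    {p q : ℝ} (hpq : p ≤ q) (hp : 0 < p) (hq : q < 1) (hA : ∀ s ∈ Icc p q, g (E s) ∈ A)
    (hgp : p ≤ φ (g (E p))) (hgq : φ (g (E q)) ≤ q) : ∃ x ∈ E '' Ioo 0 1, IsFixedPt g x := by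
  obtain ⟨s, hs, hfix⟩ := intermediate_value_Icc hpq
    (continuousOn_id.sub (h.continuousOn_coord_comp hg hA))
    ⟨show p - φ (g (E p)) ≤ 0 by linarith, show 0 ≤ q - φ (g (E q)) by linarith⟩
  refine ⟨E s, mem_image_of_mem E ⟨hp.trans_le hs.1, hs.2.trans_lt hq⟩, ?_⟩
  have hs' : φ (g (E s)) = s := by linarith [show s - φ (g (E s)) = 0 from hfix]
  rw [IsFixedPt, ← h.param_coord _ (hA s hs), hs']

end IsArcChart

namespace IsFreeArcChart

variable {X : Type*} [TopologicalSpace X] {A : Set X} {E : ℝ → X} {φ : X → ℝ}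

theorem reflect (h : IsFreeArcChart A E φ) :
    IsFreeArcChart A (fun t => E (1 - t)) (fun x => 1 - φ x) :=
  { h.toIsArcChart.reflect with isOpen_image_Ioo := image_comp_one_sub_Ioo E ▸ h.isOpen_image_Ioo }

theorem isOpen_window (h : IsFreeArcChart A E φ) (c d : ℝ) :
    IsOpen (E '' Ioo 0 1 ∩ φ ⁻¹' Ioo c d) :=
  (h.continuousOn_coord.mono h.image_Ioo_subset).isOpen_inter_preimage h.isOpen_image_Ioo isOpen_Ioo

variable [T2Space X] {g : X → X} {K : Set X} {c d : ℝ}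

theorem exists_isFixedPt_or_covers_right (h : IsFreeArcChart A E φ) (hg : Continuous g)
    (hKne : K.Nonempty) (hK : IsCompact K) (hgK : MapsTo g K K) (hKA : K ⊆ A) (hc : 0 ≤ c)
    (hd : d ≤ 1) (hKφ : MapsTo φ K (Ioo c d)) :
    (∃ x ∈ E '' Ioo 0 1, IsFixedPt g x) ∨
      ∃ p q, c < p ∧ p ≤ q ∧ q < d ∧ (∀ s ∈ Icc p q, g (E s) ∈ A) ∧
        φ (g (E p)) < d ∧ φ (g (E q)) = 1 := by
  have hT : IsCompact (φ '' K) := hK.image_of_continuousOn (h.continuousOn_coord.mono hKA)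
  have hTne : (φ '' K).Nonempty := hKne.image φ
  have hTK : ∀ t ∈ φ '' K, t ∈ Ioo c d ∧ g (E t) ∈ K := by
    rintro _ ⟨x, hx, rfl⟩
    rw [h.param_coord x (hKA hx)]
    exact ⟨hKφ hx, hgK hx⟩
  have hgT : ∀ t ∈ φ '' K, φ (g (E t)) ∈ φ '' K := fun t ht => mem_image_of_mem φ (hTK t ht).2
  obtain ⟨hu, hv⟩ := And.intro (hT.sInf_mem hTne) (hT.sSup_mem hTne)
  set u := sInf (φ '' K)
  set v := sSup (φ '' K)
  have huv : u ≤ v := csInf_le hT.bddBelow hv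
  have hgu : u ≤ φ (g (E u)) := csInf_le hT.bddBelow (hgT u hu)
  have hgv : φ (g (E v)) ≤ v := le_csSup hT.bddAbove (hgT v hv)
  have hcu : c < u := (hTK u hu).1.1
  have hvd : v < d := (hTK v hv).1.2
  have hKU : ∀ x ∈ K, x ∈ E '' Ioo 0 1 := fun x hx =>
    h.mem_image_Ioo (hKA hx) ⟨hc.trans_lt (hKφ hx).1, (hKφ hx).2.trans_le hd⟩
  rcases exists_first_exit (hg.comp h.continuous_param).continuousOn h.isOpen_image_Ioo
    (hKU _ (hTK u hu).2) with hstay | ⟨w, ⟨huw, hwv⟩, hbefore, hw_cl, hw_out⟩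
  · exact Or.inl (h.exists_isFixedPt_of_le_of_le hg huv (hc.trans_lt hcu) (hvd.trans_le hd)
      (fun s hs => h.image_Ioo_subset (hstay s hs)) hgu hgv)
  have hwA : g (E w) ∈ A := h.isClosed.closure_subset_iff.2 h.image_Ioo_subset hw_cl
  have hA : ∀ s ∈ Icc u w, g (E s) ∈ A := fun s hs =>
    hs.2.eq_or_lt.elim (fun hsw => hsw ▸ hwA) fun hsw => h.image_Ioo_subset (hbefore s ⟨hs.1, hsw⟩)
  rcases h.coord_eq_zero_or_one hwA hw_out with hw0 | hw1
  · exact Or.inl (h.exists_isFixedPt_of_le_of_le hg huw.le (hc.trans_lt hcu)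
      ((hwv.trans_lt hvd).trans_le hd) hA hgu (by linarith))
  · exact Or.inr ⟨u, w, hcu, huw.le, hwv.trans_lt hvd, hA,
      (le_csSup hT.bddAbove (hgT u hu)).trans_lt hvd, hw1⟩

theorem exists_isFixedPt_or_covers_left (h : IsFreeArcChart A E φ) (hg : Continuous g)
    (hKne : K.Nonempty) (hK : IsCompact K) (hgK : MapsTo g K K) (hKA : K ⊆ A) (hc : 0 ≤ c)
    (hd : d ≤ 1) (hKφ : MapsTo φ K (Ioo c d)) :
    (∃ x ∈ E '' Ioo 0 1, IsFixedPt g x) ∨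
      ∃ p q, c < p ∧ p ≤ q ∧ q < d ∧ (∀ s ∈ Icc p q, g (E s) ∈ A) ∧
        φ (g (E p)) = 0 ∧ c < φ (g (E q)) := by
  rcases h.reflect.exists_isFixedPt_or_covers_right hg hKne hK hgK hKA (c := 1 - d) (d := 1 - c)
    (by linarith) (by linarith) (fun x hx => ⟨by linarith [(hKφ hx).2], by linarith [(hKφ hx).1]⟩)
    with ⟨x, hx, hfix⟩ | ⟨p, q, hp, hpq, hq, hA, hgp, hgq⟩
  · exact Or.inl ⟨x, image_comp_one_sub_Ioo E ▸ hx, hfix⟩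
  · refine Or.inr ⟨1 - q, 1 - p, by linarith, by linarith, by linarith, fun s hs => ?_,
      by linarith, by linarith⟩
    simpa using hA (1 - s) ⟨by linarith [hs.2], by linarith [hs.1]⟩

theorem exists_isPeriodic (h : IsFreeArcChart A E φ) {f : X → X} (hf : Continuous f)
    (hper : Dense {K : NonemptyCompacts X | IsPeriodic (hyperMap hf) K}) :
    ∃ x ∈ E '' Ioo 0 1, IsPeriodic f x := by
  obtain ⟨K₁, m₁, hm₁, hK₁, hK₁O⟩ := exists_periodic_nonemptyCompacts_subset hf hper
    (h.isOpen_window 0 (1 / 2)) ⟨_, h.param_mem_window (t := 1 / 4) (by norm_num) (by norm_num)⟩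
  obtain ⟨K₂, m₂, hm₂, hK₂, hK₂O⟩ := exists_periodic_nonemptyCompacts_subset hf hper
    (h.isOpen_window (1 / 2) 1) ⟨_, h.param_mem_window (t := 3 / 4) (by norm_num) (by norm_num)⟩
  rcases h.exists_isFixedPt_or_covers_right (hf.iterate m₁) K₁.nonempty K₁.isCompact
    (mapsTo_iff_image_subset.2 hK₁.subset) (fun x hx => h.image_Ioo_subset (hK₁O hx).1) le_rfl
    (by norm_num) (fun x hx => (hK₁O hx).2)
    with ⟨x, hx, hfix⟩ | ⟨p₁, q₁, hp₁, hpq₁, hq₁, hA₁, hgp₁, hgq₁⟩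
  · exact ⟨x, hx, m₁, hm₁, hfix⟩
  rcases h.exists_isFixedPt_or_covers_left (hf.iterate m₂) K₂.nonempty K₂.isCompact
    (mapsTo_iff_image_subset.2 hK₂.subset) (fun x hx => h.image_Ioo_subset (hK₂O hx).1)
    (by norm_num) le_rfl (fun x hx => (hK₂O hx).2)
    with ⟨x, hx, hfix⟩ | ⟨p₂, q₂, hp₂, hpq₂, hq₂, hA₂, hgp₂, hgq₂⟩
  · exact ⟨x, hx, m₂, hm₂, hfix⟩
  obtain ⟨s, hs, hs₂, hfix⟩ := exists_comp_eq_self_of_covers hpq₁ hpq₂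
    (h.continuousOn_coord_comp (hf.iterate m₁) hA₁)
    (h.continuousOn_coord_comp (hf.iterate m₂) hA₂)
    (by linarith) (by linarith) (by linarith) (by linarith)
  refine ⟨E s, mem_image_of_mem E ⟨by linarith [hs.1], by linarith [hs.2]⟩, m₂ + m₁, by omega, ?_⟩
  rw [iterate_add_apply, ← h.param_coord _ (hA₁ s hs), ← h.param_coord _ (hA₂ _ hs₂), hfix]

end IsFreeArcChart

theorem IsArcEnds.exists_arcChart {X : Type*} [TopologicalSpace X] {A : Set X} {a b : X}
    (hA : IsArcEnds A a b) : ∃ E φ, IsArcChart A E φ ∧ E 0 = a ∧ E 1 = b := by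
  classical
  obtain ⟨e, he0, he1⟩ := hA
  set E : ℝ → X := fun t => e (projIcc 0 1 zero_le_one t)
  set φ : X → ℝ := fun x => if hx : x ∈ A then (e.symm ⟨x, hx⟩ : ℝ) else 0
  have hφ : ∀ x (hx : x ∈ A), φ x = e.symm ⟨x, hx⟩ := fun x hx => dif_pos hx
  have hφ_cont : ContinuousOn φ A := by
    rw [continuousOn_iff_continuous_domRestrict]
    have : A.domRestrict φ = fun x => (e.symm x : ℝ) := funext fun x => hφ x x.2
    rw [this]
    fun_prop
  refine ⟨E, φ, ⟨by fun_prop, hφ_cont, fun t _ => (e _).2, fun x hx => hφ x hx ▸ (e.symm _).2,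
    fun t ht => by simp [E, hφ, projIcc_of_mem zero_le_one ht], fun x hx => by simp [E, hφ x hx]⟩,
    ?_, ?_⟩
  · simp only [E, projIcc_left]; exact he0
  · simp only [E, projIcc_right]; exact he1

theorem stmt14_general {X : Type*} [MetricSpace X]
    {f : X → X} (hf : Continuous f)
    (hper : Dense {A : NonemptyCompacts X | IsPeriodic (hyperMap hf) A})
    {A : Set X} {a b : X} (hfree : IsFreeArc A a b) :
    ∃ p ∈ A \ {a, b}, IsPeriodic f p := by
  obtain ⟨E, φ, hchart, rfl, rfl⟩ := hfree.1.exists_arcChart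
  obtain ⟨x, hx, hx_per⟩ := IsFreeArcChart.exists_isPeriodic
    ⟨hchart, hchart.image_Ioo ▸ hfree.2⟩ hf hper
  exact ⟨x, hchart.image_Ioo ▸ hx, hx_per⟩

/-- If the periodic points of the induced hyperspace map are dense, then
every free arc contains, in its interior part, a periodic point of `f`. -/
theorem stmt14 {X : Type*} [MetricSpace X] [CompactSpace X] [ConnectedSpace X]
    {f : X → X} (hf : Continuous f)
    (hper : Dense {A : NonemptyCompacts X | IsPeriodic (hyperMap hf) A})
    {A : Set X} {a b : X} (hab : a ≠ b) (hfree : IsFreeArc A a b) :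
    ∃ p ∈ A \ {a, b}, IsPeriodic f p :=
  stmt14_general hf hper hfree
end
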